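/- arXiv:1304.4864 — 10 statements merged into one kernel-verified Lean document; each statement's English description precedes it below -/
import Mathlib

section
/- Let c ∈ ℂ and let (f_n) be a sequence of complex numbers (arising as values f_n = f_n(z)) satisfying f_{n+2} = f_{n+1} f_n + c. Let M be a real number with M > 2 and M > √(2|c|). If there exists an index k with |f_k| > M and |f_{k+1}| > M, then for all n ≥ 0 one has |f_{k+n}| > 2·(M/2)^{F_n}, where F_n is the Fibonacci number with F_0 = F_1 = 1; in particular the sequence (f_n) is unbounded. -/
/-! With `r = M / 2 > 1`, the bound `‖c‖ < 2 r²` makes the constant negligible: if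
`‖x‖ > 2a` and `‖y‖ > 2b` with `a, b ≥ r`, then `‖x y + c‖ > 4ab - ‖c‖ > 2ab`. Starting from
two consecutive terms above `2r`, the exponents of `r` therefore add up like Fibonacci numbers,
so `‖f (k + n)‖ > 2 r ^ fib (n + 1)`, which tends to infinity. -/

open Filter

section GrowthBound

variable {𝕜 : Type*} [NormedDivisionRing 𝕜]

lemma two_mul_mul_lt_norm_mul_add {x y c : 𝕜} {a b : ℝ} (ha : 0 ≤ a) (hb : 0 ≤ b)
    (hx : 2 * a < ‖x‖) (hy : 2 * b < ‖y‖) (hc : ‖c‖ ≤ 2 * (a * b)) :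
    2 * (a * b) < ‖x * y + c‖ := by
  have hxy : 2 * a * (2 * b) < ‖x * y‖ := by
    rw [norm_mul]
    exact mul_lt_mul'' hx hy (by positivity) (by positivity)
  have hrev : ‖x * y‖ - ‖c‖ ≤ ‖x * y + c‖ := by
    simpa only [sub_neg_eq_add, norm_neg] using norm_sub_norm_le (x * y) (-c)
  linarith

theorem two_mul_pow_fib_lt_norm_of_recurrence {c : 𝕜} {f : ℕ → 𝕜}
    (hrec : ∀ n, f (n + 2) = f (n + 1) * f n + c) {r : ℝ} (hr : 1 ≤ r)
    (hc : ‖c‖ ≤ 2 * r ^ 2) (h0 : 2 * r < ‖f 0‖) (h1 : 2 * r < ‖f 1‖) (n : ℕ) :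
    2 * r ^ Nat.fib (n + 1) < ‖f n‖ := by
  have hr_le_pow : ∀ m, r ≤ r ^ Nat.fib (m + 1) := fun m =>
    le_self_pow₀ hr (Nat.fib_pos.mpr m.succ_pos).ne'
  induction n using Nat.twoStepInduction with
  | zero => simpa using h0
  | one => simpa using h1
  | more n ih0 ih1 =>
    have hc' : ‖c‖ ≤ 2 * (r ^ Nat.fib (n + 2) * r ^ Nat.fib (n + 1)) := by
      have := mul_le_mul (hr_le_pow (n + 1)) (hr_le_pow n) (by positivity) (by positivity)
      nlinarith
    have hstep := two_mul_mul_lt_norm_mul_add (by positivity) (by positivity) ih1 ih0 hc'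
    rwa [hrec, Nat.fib_add_two, add_comm (Nat.fib (n + 1)), pow_add]

end GrowthBound

theorem stmt0 (c : ℂ) (f : ℕ → ℂ)
    (hrec : ∀ n, f (n + 2) = f (n + 1) * f n + c)
    (M : ℝ) (hM2 : M > 2) (hMc : M > Real.sqrt (2 * ‖c‖))
    (k : ℕ) (hk : ‖f k‖ > M) (hk1 : ‖f (k + 1)‖ > M) :
    (∀ n : ℕ, ‖f (k + n)‖ > 2 * (M / 2) ^ (Nat.fib (n + 1))) ∧
      ¬ BddAbove (Set.range fun n => ‖f n‖) := by
  have hr : 1 < M / 2 := by linarith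
  have hc : ‖c‖ ≤ 2 * (M / 2) ^ 2 := by
    nlinarith [(Real.sqrt_lt' (by linarith)).mp hMc]
  have hbound : ∀ n, ‖f (k + n)‖ > 2 * (M / 2) ^ Nat.fib (n + 1) :=
    two_mul_pow_fib_lt_norm_of_recurrence (f := fun n => f (k + n))
      (fun n => hrec (k + n)) hr.le hc (by simpa [mul_div_cancel₀] using hk)
      (by simpa [mul_div_cancel₀] using hk1)
  refine ⟨hbound, not_bddAbove_of_tendsto_atTop (l := atTop) ?_⟩
  have hfib : Tendsto (fun n => Nat.fib (n + 1)) atTop atTop :=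
    tendsto_atTop_mono (fun n => by simpa using Nat.le_fib_add_one (n + 1)) tendsto_id
  have hpow : Tendsto (fun n => 2 * (M / 2) ^ Nat.fib (n + 1)) atTop atTop :=
    ((tendsto_pow_atTop_atTop_of_one_lt hr).comp hfib).const_mul_atTop two_pos
  rw [← tendsto_add_atTop_iff_nat k]
  exact tendsto_atTop_mono (fun n => by rw [add_comm n k]; exact (hbound n).le) hpow
end

section
/- Let f be a nonconstant complex polynomial, c ∈ ℂ, and define f_0(z) = z, f_1(z) = f(z), f_{n+2}(z) = f_{n+1}(z)·f_n(z) + c. Then there exists R > 1 such that the set K_c = {z ∈ ℂ : sup_n |f_n(z)| < ∞} equals the intersection over all n ≥ 0 of the preimages f_n⁻¹(closed disk of radius R centered at 0). In particular K_c is compact. -/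
/-!
Write `aₙ = ‖fₙ(z)‖` and `C = ‖c‖`, so that `aₙ₊₁aₙ - C ≤ aₙ₊₂ ≤ aₙ₊₁aₙ + C`. Two consecutive
terms `≥ C + 2` force `aₙ₊₂ ≥ aₙ₊₁ + 2` from then on, so on a bounded orbit no two consecutive
terms are large. Since `|f(z)| → ∞`, this confines `z`, hence `a₀` and `a₁`, to a fixed disc. If
`aₘ₊₂ ≥ C + 2` then `aₘ₊₃` is small, and the two recursive bounds combine to
`aₘ₊₂² ≤ C aₘ₊₂ + (2C + 2) aₘ ≤ (3C + 2) S` with `S = sup aₙ`. So every term is either bounded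
independently of `z` or has square at most `(3C + 2) S`, and taking the supremum bounds `S`.
-/

open Filter Set

lemma ciSup_le_max_of_forall_le_or_sq_le {u : ℕ → ℝ} (hu : BddAbove (range u)) (hu0 : ∀ n, 0 ≤ u n)
    {K A : ℝ} (hA : 0 ≤ A) (h : ∀ n, u n ≤ K ∨ u n ^ 2 ≤ A * ⨆ n, u n) :
    ⨆ n, u n ≤ max K A := by
  set S := ⨆ n, u n
  have hS0 : 0 ≤ S := (hu0 0).trans (le_ciSup hu 0)
  have hS : S ≤ max K √(A * S) := ciSup_le fun n =>
    (h n).elim le_max_of_le_left fun hn => le_max_of_le_right (Real.le_sqrt_of_sq_le hn)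
  rcases le_max_iff.1 hS with hK | hsqrt
  · exact le_max_of_le_left hK
  · have : S ^ 2 ≤ A * S := (Real.le_sqrt hS0 (by positivity)).1 hsqrt
    exact le_max_of_le_right (by nlinarith)

namespace ProductRecursion

variable {𝕜 : Type*} [NormedDivisionRing 𝕜] {g : ℕ → 𝕜} {c : 𝕜}

lemma norm_le (hg : ∀ n, g (n + 2) = g (n + 1) * g n + c) (n : ℕ) :
    ‖g (n + 2)‖ ≤ ‖g (n + 1)‖ * ‖g n‖ + ‖c‖ := by
  rw [hg, ← norm_mul]
  exact norm_add_le _ _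

lemma le_norm (hg : ∀ n, g (n + 2) = g (n + 1) * g n + c) (n : ℕ) :
    ‖g (n + 1)‖ * ‖g n‖ - ‖c‖ ≤ ‖g (n + 2)‖ := by
  rw [hg, ← norm_mul]
  simpa using norm_sub_norm_le (g (n + 1) * g n) (-c)

lemma not_bddAbove_of_two_large (hg : ∀ n, g (n + 2) = g (n + 1) * g n + c) {n : ℕ}
    (hn : ‖c‖ + 2 ≤ ‖g n‖) (hn1 : ‖c‖ + 2 ≤ ‖g (n + 1)‖) :
    ¬BddAbove (range fun n => ‖g n‖) := by
  have grow : ∀ k : ℕ, ‖c‖ + 2 ≤ ‖g (n + k)‖ ∧ ‖c‖ + 2 + 2 * k ≤ ‖g (n + k + 1)‖ := by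
    intro k
    induction k with
    | zero => simpa using ⟨hn, hn1⟩
    | succ k ih =>
      have hstep := le_norm hg (n + k)
      have hC := norm_nonneg c
      rw [← add_assoc]
      refine ⟨by linarith [ih.2], ?_⟩
      show _ ≤ ‖g (n + k + 2)‖
      push_cast
      nlinarith [mul_le_mul_of_nonneg_left ih.1 (norm_nonneg (g (n + k + 1)))]
  rintro ⟨W, hW⟩
  obtain ⟨k, hk⟩ := exists_nat_gt W
  have := hW (mem_range_self (n + k + 1))
  linarith [(grow k).2, norm_nonneg c]

lemma sq_norm_le_of_norm_lt (hg : ∀ n, g (n + 2) = g (n + 1) * g n + c) {m : ℕ}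
    (hm : ‖g (m + 3)‖ < ‖c‖ + 2) :
    ‖g (m + 2)‖ ^ 2 ≤ ‖c‖ * ‖g (m + 2)‖ + (2 * ‖c‖ + 2) * ‖g m‖ := by
  have hprod : ‖g (m + 2)‖ * ‖g (m + 1)‖ ≤ 2 * ‖c‖ + 2 := by linarith [le_norm hg (m + 1)]
  calc ‖g (m + 2)‖ ^ 2 ≤ ‖g (m + 2)‖ * (‖g (m + 1)‖ * ‖g m‖ + ‖c‖) := by
        rw [sq]; exact mul_le_mul_of_nonneg_left (norm_le hg m) (norm_nonneg _)
    _ = ‖g (m + 2)‖ * ‖g (m + 1)‖ * ‖g m‖ + ‖c‖ * ‖g (m + 2)‖ := by ring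
    _ ≤ (2 * ‖c‖ + 2) * ‖g m‖ + ‖c‖ * ‖g (m + 2)‖ :=
        add_le_add_left (mul_le_mul_of_nonneg_right hprod (norm_nonneg _)) _
    _ = _ := by ring

lemma norm_le_of_bddAbove (hg : ∀ n, g (n + 2) = g (n + 1) * g n + c)
    (hbdd : BddAbove (range fun n => ‖g n‖)) {K : ℝ} (h0 : ‖g 0‖ ≤ K) (h1 : ‖g 1‖ ≤ K)
    (n : ℕ) : ‖g n‖ ≤ max K (3 * ‖c‖ + 2) := by
  have hC := norm_nonneg c
  have hsup : ⨆ n, ‖g n‖ ≤ max (max K (‖c‖ + 2)) (3 * ‖c‖ + 2) := by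
    refine ciSup_le_max_of_forall_le_or_sq_le hbdd (fun _ => norm_nonneg _) (by linarith) ?_
    have hS : ∀ m, ‖g m‖ ≤ ⨆ n, ‖g n‖ := le_ciSup hbdd
    rintro (_ | _ | m)
    · exact .inl (le_max_of_le_left h0)
    · exact .inl (le_max_of_le_left h1)
    by_cases hsmall : ‖g (m + 2)‖ < ‖c‖ + 2
    · exact .inl (le_max_of_le_right hsmall.le)
    have hnext : ‖g (m + 3)‖ < ‖c‖ + 2 := by
      by_contra hbig
      exact not_bddAbove_of_two_large hg (not_lt.1 hsmall) (not_lt.1 hbig) hbdd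
    refine .inr ?_
    nlinarith [sq_norm_le_of_norm_lt hg hnext, hS m, hS (m + 2)]
  rw [max_assoc, max_eq_right (a := ‖c‖ + 2) (by linarith)] at hsup
  exact (le_ciSup hbdd n).trans hsup

end ProductRecursion

lemma Polynomial.exists_norm_le_or_le_norm {𝕜 : Type*} [NormedField 𝕜] [ProperSpace 𝕜]
    (f : Polynomial 𝕜) (hf : 0 < f.degree) (B : ℝ) :
    ∃ K, ∀ z : 𝕜, (‖z‖ ≤ K ∧ ‖f.eval z‖ ≤ K) ∨ (B ≤ ‖z‖ ∧ B ≤ ‖f.eval z‖) := by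
  have hlarge : ∀ᶠ z in comap norm atTop, B ≤ ‖z‖ ∧ B ≤ ‖f.eval z‖ :=
    (tendsto_comap.eventually_ge_atTop B).and
      ((f.tendsto_norm_atTop hf tendsto_comap).eventually_ge_atTop B)
  obtain ⟨r, -, hr⟩ := (atTop_basis.comap norm).eventually_iff.1 hlarge
  obtain ⟨M, hM⟩ := (isCompact_closedBall (0 : 𝕜) r).exists_bound_of_continuousOn
    f.continuous.continuousOn
  refine ⟨max r M, fun z => ?_⟩
  rcases le_total ‖z‖ r with hz | hz
  · have := hM z (by simpa using hz)
    exact .inl ⟨le_max_of_le_left hz, le_max_of_le_right this⟩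
  · exact .inr (hr hz)

theorem stmt2 (f : Polynomial ℂ) (hf : 0 < f.degree) (c : ℂ)
    (fs : ℕ → ℂ → ℂ)
    (h0 : ∀ z, fs 0 z = z) (h1 : ∀ z, fs 1 z = f.eval z)
    (hrec : ∀ n z, fs (n + 2) z = fs (n + 1) z * fs n z + c) :
    ∃ R : ℝ, R > 1 ∧
      ({z : ℂ | BddAbove (Set.range fun n => ‖fs n z‖)} =
        ⋂ n : ℕ, (fs n) ⁻¹' Metric.closedBall (0 : ℂ) R) ∧
      IsCompact {z : ℂ | BddAbove (Set.range fun n => ‖fs n z‖)} := by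
  obtain ⟨K, hK⟩ := f.exists_norm_le_or_le_norm hf (‖c‖ + 2)
  set R := max K (3 * ‖c‖ + 2)
  have hbound : ∀ z, BddAbove (range fun n => ‖fs n z‖) → ∀ n, ‖fs n z‖ ≤ R := by
    intro z hz
    have hsmall := (hK z).resolve_right fun ⟨hz0, hz1⟩ =>
      ProductRecursion.not_bddAbove_of_two_large (fun n => hrec n z) (n := 0)
        (by rwa [h0]) (by rwa [h1]) hz
    exact ProductRecursion.norm_le_of_bddAbove (fun n => hrec n z) hz
      (by rw [h0]; exact hsmall.1) (by rw [h1]; exact hsmall.2)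
  have heq : {z : ℂ | BddAbove (range fun n => ‖fs n z‖)} =
      ⋂ n : ℕ, fs n ⁻¹' Metric.closedBall 0 R := by
    ext z
    simp only [mem_ofPred_eq, mem_iInter, mem_preimage, mem_closedBall_zero_iff]
    exact ⟨hbound z, fun hz => ⟨R, forall_mem_range.2 hz⟩⟩
  have hcont : ∀ n, Continuous (fs n) := Nat.twoStepInduction
    (by rw [funext h0]; fun_prop) (by rw [funext h1]; exact f.continuous)
    fun n hn hn1 => by rw [funext (hrec n)]; fun_prop
  refine ⟨R, lt_max_of_lt_right (by linarith [norm_nonneg c]), heq, heq ▸ Metric.isCompact_of_isClosed_isBounded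
    (isClosed_iInter fun n => Metric.isClosed_closedBall.preimage (hcont n)) ?_⟩
  refine (Metric.isBounded_closedBall (x := 0) (r := R)).subset (iInter_subset_of_subset 0 ?_)
  simp [funext h0]
end

section
/- With f_n defined by f_0(z)=z, f_1(z)=f(z) nonconstant polynomial, f_{n+2}=f_{n+1}f_n+c, there exists R > 0 such that for every n ≥ 1, the preimage f_{n+1}⁻¹(D(0,R)) is contained in f_n⁻¹(D(0,R)), where D(0,R) is the open disk of radius R, and K_c equals the intersection of the sets f_n⁻¹(D(0,R)) for n ≥ 1. -/
/-!
Write `a n = f_n(z)`, so that `a (n + 2) = a (n + 1) * a n + c`. Compactness of the disk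
`‖z‖ ≤ 2` and properness of `f` give a constant `ρ`, independent of `z`, with
`‖a 0‖ ≤ 2 → ‖a 1‖ < ρ` and `‖a 1‖ ≤ 2 → ‖a 0‖ < ρ`. If `ρ ≥ 2 (2 + ‖c‖)`, this propagates along
the recurrence: a term of norm `≤ 1/2` is followed by one of norm `< ρ`, because a large predecessor
of a small term must itself be preceded by a tiny one. Consequently `‖a n‖ ≤ 2` forces
`‖a (n + 1)‖ < R := 2ρ + ‖c‖`, so once a term with `n ≥ 1` has norm `≥ R`, its predecessor has norm
`> 2` and the next term is larger by at least `1`. Hence the orbit is bounded exactly when no term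
after the first reaches norm `R`, and for `n ≥ 1` a term of norm `≥ R` is followed by another.
-/

open Metric Set

namespace ProductRecurrence

variable {𝕜 : Type*} [NormedDivisionRing 𝕜] {a : ℕ → 𝕜} {c : 𝕜} {ρ : ℝ}

lemma norm_le (ha : ∀ n, a (n + 2) = a (n + 1) * a n + c) (n : ℕ) :
    ‖a (n + 2)‖ ≤ ‖a (n + 1)‖ * ‖a n‖ + ‖c‖ := by
  rw [ha, ← norm_mul]
  exact norm_add_le _ _

lemma le_norm (ha : ∀ n, a (n + 2) = a (n + 1) * a n + c) (n : ℕ) :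
    ‖a (n + 1)‖ * ‖a n‖ - ‖c‖ ≤ ‖a (n + 2)‖ := by
  rw [ha, ← norm_mul]
  simpa using norm_sub_le (a (n + 1) * a n + c) c

lemma norm_succ_lt_of_norm_succ_succ_le (ha : ∀ n, a (n + 2) = a (n + 1) * a n + c)
    (hρ : 2 * (2 + ‖c‖) ≤ ρ) {n : ℕ} (hsmall : ‖a n‖ ≤ 1 / 2 → ‖a (n + 1)‖ < ρ)
    (h : ‖a (n + 2)‖ ≤ 2) : ‖a (n + 1)‖ < ρ := by
  by_contra! hbig
  have hpos : 0 < ‖a (n + 1)‖ := by linarith [norm_nonneg c]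
  have : ‖a (n + 1)‖ * ‖a n‖ ≤ ‖a (n + 1)‖ * (1 / 2) := by linarith [le_norm ha n]
  exact (hsmall (le_of_mul_le_mul_left this hpos)).not_ge hbig

lemma norm_succ_succ_lt (ha : ∀ n, a (n + 2) = a (n + 1) * a n + c)
    (hρ : 2 * (2 + ‖c‖) ≤ ρ) {n : ℕ} (h : ‖a (n + 1)‖ ≤ 1 / 2) (hprev : ‖a n‖ < ρ) :
    ‖a (n + 2)‖ < ρ :=
  calc ‖a (n + 2)‖ ≤ ‖a (n + 1)‖ * ‖a n‖ + ‖c‖ := norm_le ha n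
    _ ≤ 1 / 2 * ρ + ‖c‖ := by gcongr
    _ < ρ := by linarith

lemma norm_succ_lt_of_norm_le_half (ha : ∀ n, a (n + 2) = a (n + 1) * a n + c)
    (hρ : 2 * (2 + ‖c‖) ≤ ρ) (h0 : ‖a 0‖ ≤ 2 → ‖a 1‖ < ρ) (h1 : ‖a 1‖ ≤ 2 → ‖a 0‖ < ρ)
    (n : ℕ) : ‖a n‖ ≤ 1 / 2 → ‖a (n + 1)‖ < ρ := by
  induction n using Nat.twoStepInduction with
  | zero => exact fun h ↦ h0 (by linarith)
  | one => exact fun h ↦ norm_succ_succ_lt ha hρ h (h1 (by linarith))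
  | more n ih _ =>
    exact fun h ↦ norm_succ_succ_lt ha hρ h
      (norm_succ_lt_of_norm_succ_succ_le ha hρ ih (by linarith))

lemma norm_lt_of_norm_succ_le (ha : ∀ n, a (n + 2) = a (n + 1) * a n + c)
    (hρ : 2 * (2 + ‖c‖) ≤ ρ) (h0 : ‖a 0‖ ≤ 2 → ‖a 1‖ < ρ) (h1 : ‖a 1‖ ≤ 2 → ‖a 0‖ < ρ) :
    ∀ n, ‖a (n + 1)‖ ≤ 2 → ‖a n‖ < ρ
  | 0 => h1
  | n + 1 => norm_succ_lt_of_norm_succ_succ_le ha hρ (norm_succ_lt_of_norm_le_half ha hρ h0 h1 n)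

lemma norm_succ_lt_of_norm_le (ha : ∀ n, a (n + 2) = a (n + 1) * a n + c)
    (hρ : 2 * (2 + ‖c‖) ≤ ρ) (h0 : ‖a 0‖ ≤ 2 → ‖a 1‖ < ρ) (h1 : ‖a 1‖ ≤ 2 → ‖a 0‖ < ρ) :
    ∀ n, ‖a n‖ ≤ 2 → ‖a (n + 1)‖ < 2 * ρ + ‖c‖
  | 0, h => by linarith [h0 h, norm_nonneg c]
  | n + 1, h =>
    calc ‖a (n + 2)‖ ≤ ‖a (n + 1)‖ * ‖a n‖ + ‖c‖ := norm_le ha n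
      _ ≤ 2 * ‖a n‖ + ‖c‖ := by gcongr
      _ < 2 * ρ + ‖c‖ := by linarith [norm_lt_of_norm_succ_le ha hρ h0 h1 n h]

lemma norm_add_one_le_of_le (ha : ∀ n, a (n + 2) = a (n + 1) * a n + c)
    (hρ : 2 * (2 + ‖c‖) ≤ ρ) (h0 : ‖a 0‖ ≤ 2 → ‖a 1‖ < ρ) (h1 : ‖a 1‖ ≤ 2 → ‖a 0‖ < ρ)
    (n : ℕ) (h : 2 * ρ + ‖c‖ ≤ ‖a (n + 1)‖) : ‖a (n + 1)‖ + 1 ≤ ‖a (n + 2)‖ := by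
  have hprev : 2 < ‖a n‖ := by
    by_contra! hn
    exact (norm_succ_lt_of_norm_le ha hρ h0 h1 n hn).not_ge h
  calc ‖a (n + 1)‖ + 1 ≤ ‖a (n + 1)‖ * 2 - ‖c‖ := by linarith [norm_nonneg c]
    _ ≤ ‖a (n + 1)‖ * ‖a n‖ - ‖c‖ := by gcongr
    _ ≤ ‖a (n + 2)‖ := le_norm ha n

end ProductRecurrence

lemma bddAbove_range_iff_forall_lt_of_escape {u : ℕ → ℝ} {R : ℝ}
    (h : ∀ n, R ≤ u (n + 1) → u (n + 1) + 1 ≤ u (n + 2)) :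
    BddAbove (range u) ↔ ∀ n, u (n + 1) < R := by
  refine ⟨fun ⟨B, hB⟩ n ↦ ?_, fun hlt ↦ ⟨max (u 0) R, forall_mem_range.2 ?_⟩⟩
  · by_contra! hn
    have hgrow (k : ℕ) : R + k ≤ u (n + k + 1) := by
      induction k with
      | zero => simpa using hn
      | succ k ih =>
        rw [show n + (k + 1) + 1 = n + k + 2 by ring]
        push_cast
        linarith [h (n + k) (by linarith [(k.cast_nonneg : (0 : ℝ) ≤ k)])]
    obtain ⟨k, hk⟩ := exists_nat_gt (B - R)
    linarith [hgrow k, hB (mem_range_self (n + k + 1))]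
  · rintro (_ | n)
    exacts [le_max_left _ _, (hlt n).le.trans (le_max_right _ _)]

theorem stmt3 (f : Polynomial ℂ) (hf : 0 < f.degree) (c : ℂ)
    (fs : ℕ → ℂ → ℂ)
    (h0 : ∀ z, fs 0 z = z) (h1 : ∀ z, fs 1 z = f.eval z)
    (hrec : ∀ n z, fs (n + 2) z = fs (n + 1) z * fs n z + c) :
    ∃ R : ℝ, R > 0 ∧
      (∀ n : ℕ, 1 ≤ n →
        (fs (n + 1)) ⁻¹' Metric.ball (0 : ℂ) R ⊆ (fs n) ⁻¹' Metric.ball (0 : ℂ) R) ∧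
      ({z : ℂ | BddAbove (Set.range fun n => ‖fs n z‖)} =
        ⋂ n : ℕ, (fs (n + 1)) ⁻¹' Metric.ball (0 : ℂ) R) := by
  obtain ⟨M, hM⟩ := isBounded_iff_forall_norm_le.1
    ((isCompact_closedBall (0 : ℂ) 2).image f.continuous).isBounded
  obtain ⟨N, hN⟩ := isBounded_iff_forall_norm_le.1
    ((f.isProperMap_eval hf).isCompact_preimage (isCompact_closedBall (0 : ℂ) 2)).isBounded
  set ρ := max M N + 2 * (2 + ‖c‖)
  have hc : 0 ≤ ‖c‖ := norm_nonneg c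
  have hM0 : 0 ≤ M :=
    (norm_nonneg _).trans (hM _ (mem_image_of_mem _ (mem_closedBall_self zero_le_two)))
  have hρ : 2 * (2 + ‖c‖) ≤ ρ := by linarith [le_max_left M N]
  have hsmall (z : ℂ) : ‖fs 0 z‖ ≤ 2 → ‖fs 1 z‖ < ρ := by
    rw [h0, h1]
    intro hz
    linarith [hM _ (mem_image_of_mem _ (mem_closedBall_zero_iff.2 hz)), le_max_left M N]
  have hprev (z : ℂ) : ‖fs 1 z‖ ≤ 2 → ‖fs 0 z‖ < ρ := by
    rw [h0, h1]
    intro hz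
    linarith [hN z (mem_closedBall_zero_iff.2 hz), le_max_right M N]
  have hgrow (z : ℂ) :=
    ProductRecurrence.norm_add_one_le_of_le (a := (fs · z)) (hrec · z) hρ (hsmall z) (hprev z)
  refine ⟨2 * ρ + ‖c‖, by linarith, ?_, ?_⟩
  · rintro (_ | n) hn z hz
    · omega
    · simp only [mem_preimage, mem_ball_zero_iff] at hz ⊢
      by_contra! hz'
      linarith [hgrow z n hz']
  · ext z
    simpa [mem_ball_zero_iff] using bddAbove_range_iff_forall_lt_of_escape (hgrow z)
end

section
/- Define h_n(w,z) by h_0(w,z)=z, h_1(w,z)=w, h_{n+2}=h_{n+1}·h_n+c, and let d_n be the Fibonacci-type degrees with d_0=1, d_1=deg f, d_{n+1}=d_n+d_{n-1}. Then there exists R > 1 such that for all |w|, |z| > R and all n ≥ 0: R ≤ |h_n(w,z)| ≤ (e^{d_n}/2)·|z|^{d_n}·|w|^{d_n}. -/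
/-!
Put `R = ‖c‖ + 2` and `x = ‖z‖ ‖w‖ ≥ 1`. Both bounds are propagated together along the
two-step recursion. Below, `‖a b + c‖ ≥ R² - ‖c‖ ≥ R`. Above, the product of the bounds
`eᵐ xᵐ / 2` and `eⁿ xⁿ / 2` is half of `eᵐ⁺ⁿ xᵐ⁺ⁿ / 2`, and the other half absorbs `‖c‖ ≤ x`
because `eᵐ⁺ⁿ / 4 ≥ 1`.
-/

open Real

theorem one_le_of_add_recurrence {d : ℕ → ℕ} (hd0 : d 0 = 1) (hd1 : 0 < d 1)
    (hdrec : ∀ n, d (n + 2) = d (n + 1) + d n) (n : ℕ) : 1 ≤ d n := by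
  induction n using Nat.twoStepInduction with
  | zero => exact hd0.ge
  | one => exact hd1
  | more n _ ih => rw [hdrec]; omega

theorem le_norm_mul_add {𝕜 : Type*} [NormedDivisionRing 𝕜] {a b c : 𝕜}
    (ha : ‖c‖ + 2 ≤ ‖a‖) (hb : ‖c‖ + 2 ≤ ‖b‖) : ‖c‖ + 2 ≤ ‖a * b + c‖ := by
  have hc := norm_nonneg c
  have hab : (‖c‖ + 2) * (‖c‖ + 2) ≤ ‖a‖ * ‖b‖ := mul_le_mul ha hb (by positivity) (by linarith)
  have := norm_sub_norm_le (a * b) (-c)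
  rw [norm_neg, sub_neg_eq_add, norm_mul] at this
  nlinarith

theorem two_le_exp_natCast {n : ℕ} (hn : 1 ≤ n) : 2 ≤ exp n := by
  have : (1 : ℝ) ≤ n := by exact_mod_cast hn
  linarith [add_one_le_exp (n : ℝ)]

theorem le_half_exp_mul_pow {x y : ℝ} {n : ℕ} (hn : 1 ≤ n) (hx : 1 ≤ x) (hy : y ≤ x) :
    y ≤ exp n / 2 * x ^ n :=
  calc y ≤ x ^ n := hy.trans (le_self_pow₀ hx (by omega))
    _ ≤ exp n / 2 * x ^ n := le_mul_of_one_le_left (by positivity) (by linarith [two_le_exp_natCast hn])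

theorem norm_mul_add_le_half_exp_mul_pow {𝕜 : Type*} [SeminormedRing 𝕜] {a b c : 𝕜}
    {x : ℝ} {m n : ℕ} (hm : 1 ≤ m) (hn : 1 ≤ n) (hx : 1 ≤ x) (hc : ‖c‖ ≤ x)
    (ha : ‖a‖ ≤ exp m / 2 * x ^ m) (hb : ‖b‖ ≤ exp n / 2 * x ^ n) :
    ‖a * b + c‖ ≤ exp ↑(m + n) / 2 * x ^ (m + n) := by
  rw [Nat.cast_add, exp_add]
  have hc' : ‖c‖ ≤ exp m * exp n / 4 * x ^ (m + n) :=
    calc ‖c‖ ≤ x ^ (m + n) := hc.trans (le_self_pow₀ hx (by omega))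
      _ ≤ exp m * exp n / 4 * x ^ (m + n) := by
        refine le_mul_of_one_le_left (by positivity) ?_
        nlinarith [two_le_exp_natCast hm, two_le_exp_natCast hn]
  calc ‖a * b + c‖ ≤ ‖a‖ * ‖b‖ + ‖c‖ := (norm_add_le _ _).trans (by gcongr; exact norm_mul_le _ _)
    _ ≤ (exp m / 2 * x ^ m) * (exp n / 2 * x ^ n) + exp m * exp n / 4 * x ^ (m + n) := by
      gcongr
    _ = exp m * exp n / 2 * x ^ (m + n) := by ring

theorem stmt4 (c : ℂ) (h : ℕ → ℂ → ℂ → ℂ)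
    (h0 : ∀ w z, h 0 w z = z) (h1 : ∀ w z, h 1 w z = w)
    (hrec : ∀ n w z, h (n + 2) w z = h (n + 1) w z * h n w z + c)
    (d : ℕ → ℕ) (hd : 0 < d 1) (hd0 : d 0 = 1)
    (hdrec : ∀ n, d (n + 2) = d (n + 1) + d n) :
    ∃ R : ℝ, R > 1 ∧ ∀ w z : ℂ, ‖w‖ > R → ‖z‖ > R → ∀ n : ℕ,
      R ≤ ‖h n w z‖ ∧
      ‖h n w z‖ ≤
        Real.exp (d n) / 2 * ‖z‖ ^ (d n) * ‖w‖ ^ (d n) := by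
  refine ⟨‖c‖ + 2, by linarith [norm_nonneg c], fun w z hw hz n => ?_⟩
  have hd1 := one_le_of_add_recurrence hd0 hd hdrec
  have hzx : ‖z‖ ≤ ‖z‖ * ‖w‖ := le_mul_of_one_le_right (norm_nonneg z) (by linarith [norm_nonneg c])
  have hwx : ‖w‖ ≤ ‖z‖ * ‖w‖ := le_mul_of_one_le_left (norm_nonneg w) (by linarith [norm_nonneg c])
  have hx : 1 ≤ ‖z‖ * ‖w‖ := by linarith [norm_nonneg c]
  rw [mul_assoc, ← mul_pow]
  induction n using Nat.twoStepInduction with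
  | zero => rw [h0]; exact ⟨hz.le, le_half_exp_mul_pow (hd1 0) hx hzx⟩
  | one => rw [h1]; exact ⟨hw.le, le_half_exp_mul_pow (hd1 1) hx hwx⟩
  | more n ih₀ ih₁ =>
    rw [hrec, hdrec]
    exact ⟨le_norm_mul_add ih₁.1 ih₀.1, norm_mul_add_le_half_exp_mul_pow (hd1 _) (hd1 _) hx
      (by linarith) ih₁.2 ih₀.2⟩
end

section
/- Let f be a nonconstant polynomial, c ∈ ℂ, and f_n as in the Fibonacci system. Then there exists a constant A > 0 such that for every n ≥ 1 and every z ∈ ℂ, |log₊|f_{n+1}(z)| − log₊|f_n(z)| − log₊|f_{n-1}(z)|| ≤ A, where log₊(x) = max(log x, 0). -/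
/-!
Write `x_n = ‖f_n(z)‖`. Since `f_{n+1} = f_n f_{n-1} + c`, the bound
`log⁺ x_{n+1} ≤ log⁺ x_n + log⁺ x_{n-1} + O(1)` is immediate. The reverse bound can only fail
when one of `x_n, x_{n-1}` is at most `1/2` and the other is huge. For `R` large no consecutive
pair is of this kind: it holds for `(z, f(z))` because `f` is a nonconstant polynomial, and the
recursion propagates it. Without such a pair, either both terms are below `R`, or both exceed
`1/2` and their product is at least `R/2`, so that it dominates `c`.
-/

open Real Filter Bornology

namespace Real

lemma posLog_le_log_two_add_log {s : ℝ} (hs : 1 / 2 ≤ s) : log⁺ s ≤ log 2 + log s := by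
  rw [← log_mul two_ne_zero (by linarith)]
  exact max_le (log_nonneg (by linarith)) (log_le_log (by linarith) (by linarith))

lemma posLog_add_posLog_le_posLog_mul {s t : ℝ} (hs : 1 / 2 ≤ s) (ht : 1 / 2 ≤ t) :
    log⁺ s + log⁺ t ≤ log⁺ (s * t) + 2 * log 2 := by
  have hst : log s + log t ≤ log⁺ (s * t) := by
    rw [← log_mul (by linarith) (by linarith)]
    exact le_max_right _ _
  linarith [posLog_le_log_two_add_log hs, posLog_le_log_two_add_log ht]

end Real

section

variable {𝕜 : Type*}

lemma posLog_norm_mul_add_le [SeminormedRing 𝕜] (x y c : 𝕜) :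
    log⁺ ‖y * x + c‖ ≤ log⁺ ‖x‖ + log⁺ ‖y‖ + log⁺ ‖c‖ + log 2 := by
  have hmul : log⁺ ‖y * x‖ ≤ log⁺ ‖y‖ + log⁺ ‖x‖ :=
    (posLog_le_posLog (norm_nonneg _) (norm_mul_le y x)).trans posLog_mul
  linarith [posLog_norm_add_le (y * x) c]

variable [NormedDivisionRing 𝕜]

def BalancedPair (R : ℝ) (x y : 𝕜) : Prop :=
  (‖x‖ ≤ 1 / 2 → ‖y‖ < R) ∧ (‖y‖ ≤ 1 / 2 → ‖x‖ < R)

namespace BalancedPair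

variable {R : ℝ} {x y c : 𝕜}

lemma mul_add (h : BalancedPair R x y) (hR : 1 + 2 * ‖c‖ ≤ R) :
    BalancedPair R y (y * x + c) := by
  have hyx : ‖y * x + c‖ ≤ ‖y‖ * ‖x‖ + ‖c‖ := (norm_add_le _ _).trans_eq (by rw [norm_mul])
  have hyx' : ‖y‖ * ‖x‖ ≤ ‖y * x + c‖ + ‖c‖ := by
    rw [← norm_mul]; simpa using norm_sub_le (y * x + c) c
  constructor
  · intro hy
    by_contra! hbig
    have hx : ‖x‖ < R := h.2 hy
    nlinarith [norm_nonneg x]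
  · intro hsmall
    by_contra! hy
    have hx : ‖x‖ ≤ 1 / 2 := by nlinarith [norm_nonneg x]
    exact (h.1 hx).not_ge hy

lemma posLog_add_posLog_le (h : BalancedPair R x y) (hR : 1 ≤ R) (hc : 4 * ‖c‖ ≤ R) :
    log⁺ ‖x‖ + log⁺ ‖y‖ ≤ log⁺ ‖y * x + c‖ + 2 * log R + 3 * log 2 := by
  have hlogR : log⁺ R = log R := posLog_eq_log (by rwa [abs_of_nonneg (by linarith)])
  have hlog2 : 0 ≤ log 2 := log_nonneg one_le_two
  by_cases hsmall : ‖x‖ < R ∧ ‖y‖ < R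
  · have hx := posLog_le_posLog (norm_nonneg x) hsmall.1.le
    have hy := posLog_le_posLog (norm_nonneg y) hsmall.2.le
    linarith [posLog_nonneg (x := ‖y * x + c‖)]
  obtain ⟨hx, hy, hprod⟩ : 1 / 2 ≤ ‖x‖ ∧ 1 / 2 ≤ ‖y‖ ∧ R ≤ 2 * (‖y‖ * ‖x‖) := by
    rcases not_and_or.1 hsmall with hx | hy
    · have hy : 1 / 2 < ‖y‖ := lt_of_not_ge fun hy => hx (h.2 hy)
      refine ⟨by linarith, hy.le, ?_⟩
      nlinarith
    · have hx : 1 / 2 < ‖x‖ := lt_of_not_ge fun hx => hy (h.1 hx)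
      refine ⟨hx.le, by linarith, ?_⟩
      nlinarith
  have hdom : ‖y‖ * ‖x‖ ≤ 2 * ‖y * x + c‖ := by
    have := norm_sub_le (y * x + c) c
    rw [add_sub_cancel_right, norm_mul] at this
    linarith
  have hlog : log⁺ (‖y‖ * ‖x‖) ≤ log 2 + log⁺ ‖y * x + c‖ := by
    calc log⁺ (‖y‖ * ‖x‖) ≤ log⁺ (2 * ‖y * x + c‖) := posLog_le_posLog (by positivity) hdom
      _ ≤ log⁺ 2 + log⁺ ‖y * x + c‖ := posLog_mul
      _ = log 2 + log⁺ ‖y * x + c‖ := by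
        rw [posLog_eq_log (by norm_num)]
  have hR0 : 0 ≤ log R := log_nonneg hR
  linarith [posLog_add_posLog_le_posLog_mul hy hx]

lemma of_recurrence {g : ℕ → 𝕜}
    (hrec : ∀ n, g (n + 2) = g (n + 1) * g n + c) (hR : 1 + 2 * ‖c‖ ≤ R)
    (h₀ : BalancedPair R (g 0) (g 1)) (n : ℕ) : BalancedPair R (g n) (g (n + 1)) := by
  induction n with
  | zero => exact h₀
  | succ n ih => rw [hrec]; exact ih.mul_add hR

end BalancedPair

lemma eventually_balancedPair_apply [ProperSpace 𝕜] {g : 𝕜 → 𝕜} (hg : Continuous g)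
    (hg_tendsto : Tendsto (‖g ·‖) (cobounded 𝕜) atTop) :
    ∀ᶠ R in atTop, ∀ z, BalancedPair R z (g z) := by
  obtain ⟨C, hC⟩ := (isCompact_closedBall (0 : 𝕜) (1 / 2)).exists_bound_of_continuousOn
    hg.continuousOn
  obtain ⟨B, -, hB⟩ := hasBasis_cobounded_norm.eventually_iff.1
    (hg_tendsto.eventually_gt_atTop (1 / 2))
  filter_upwards [eventually_gt_atTop C, eventually_gt_atTop B] with R hCR hBR z
  refine ⟨fun hz => ?_, fun hgz => ?_⟩
  · exact (hC z (by simpa using hz)).trans_lt hCR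
  · by_contra! hz
    exact (hB (show B ≤ ‖z‖ by linarith)).not_ge hgz

end

theorem stmt5 (f : Polynomial ℂ) (hf : 0 < f.degree) (c : ℂ)
    (fs : ℕ → ℂ → ℂ)
    (h0 : ∀ z, fs 0 z = z) (h1 : ∀ z, fs 1 z = f.eval z)
    (hrec : ∀ n z, fs (n + 2) z = fs (n + 1) z * fs n z + c) :
    ∃ A : ℝ, A > 0 ∧ ∀ n : ℕ, 1 ≤ n → ∀ z : ℂ,
      |max (Real.log (‖fs (n + 1) z‖)) 0 -
        max (Real.log (‖fs n z‖)) 0 -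
        max (Real.log (‖fs (n - 1) z‖)) 0| ≤ A := by
  obtain ⟨R, hbase, hR⟩ := ((eventually_balancedPair_apply f.continuous
    (f.tendsto_norm_atTop hf tendsto_norm_cobounded_atTop)).and
    (eventually_ge_atTop (1 + 4 * ‖c‖))).exists
  have hbal (n : ℕ) (z : ℂ) : BalancedPair R (fs n z) (fs (n + 1) z) :=
    BalancedPair.of_recurrence (g := (fs · z)) (fun n => hrec n z) (by linarith [norm_nonneg c])
      (by simpa only [h0, h1] using hbase z) n
  have hc : 0 ≤ log⁺ ‖c‖ := posLog_nonneg
  have hlogR : 0 ≤ log R := log_nonneg (by linarith [norm_nonneg c])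
  have hlog2 : 0 < log 2 := log_pos one_lt_two
  refine ⟨log⁺ ‖c‖ + 2 * log R + 4 * log 2, by positivity, ?_⟩
  rintro (_ | n) hn z
  · omega
  simp only [max_comm _ (0 : ℝ), ← posLog_apply, Nat.add_sub_cancel, hrec]
  have hupper := posLog_norm_mul_add_le (fs n z) (fs (n + 1) z) c
  have hlower := (hbal n z).posLog_add_posLog_le (c := c) (by linarith [norm_nonneg c])
    (by linarith)
  rw [abs_le]
  constructor <;> linarith
end

section
/- With f_n the Fibonacci polynomial system and d_n its degree sequence (d_0=1, d_1=deg f, d_{n+1}=d_n+d_{n-1}), there exists a constant C > 0 such that for all n ≥ 0 and all z ∈ ℂ: |(1/d_{n+1})·log₊|f_{n+1}(z)| − (1/d_n)·log₊|f_n(z)|| ≤ C/d_{n+1}. Consequently, the sequence g_n(z) = (1/d_n)·log₊|f_n(z)| converges uniformly on ℂ. -/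
/-!
Write `u n = log⁺ ‖f_n z‖`. Along the recursion `u (n + 2) = u (n + 1) + u n + O(1)` uniformly
in `z`: the upper bound is the triangle inequality; for the lower bound, once `M` is large the
property "if one of `f_n z`, `f_{n+1} z` has norm `≥ M`, the other has norm `≥ 1/2`" passes from
`n` to `n + 1`, so the product `f_{n+1} f_n` cannot lose more than a bounded amount of size.
With `u 1 = deg f · u 0 + O(1)`, induction gives `|d n u (n + 1) - d (n + 1) u n| = O(d n)`,
which is the first claim. The `d n` grow geometrically, so the bounds `C / d (n + 1)` are
summable and `u n / d n` is uniformly Cauchy.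
-/

open Real Filter Topology Asymptotics Bornology

lemma Real.posLog_add_posLog_le_posLog_mul_add_log_two {x y : ℝ} (hx : 1 ≤ x) (hy : 1 / 2 ≤ y) :
    log⁺ x + log⁺ y ≤ log⁺ (x * y) + log 2 := by
  have hy0 : 0 < y := by linarith
  have hlog_y : log⁺ y ≤ log (2 * y) :=
    max_le (log_nonneg (by linarith)) (log_le_log hy0 (by linarith))
  calc log⁺ x + log⁺ y ≤ log x + log (2 * y) := by
        rw [posLog_eq_log (by rwa [abs_of_nonneg (by linarith)])]; gcongr
    _ = log (2 * (x * y)) := by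
        rw [log_mul (by positivity) (by positivity), log_mul (by positivity) (by positivity),
          log_mul (by positivity) (by positivity)]; ring
    _ ≤ log⁺ (2 * (x * y)) := le_max_right _ _
    _ ≤ log⁺ 2 + log⁺ (x * y) := posLog_mul
    _ = log⁺ (x * y) + log 2 := by
        rw [posLog_eq_log (by norm_num [abs_of_pos]), add_comm]

lemma Real.posLog_add_posLog_le_posLog_mul_add {M x y : ℝ} (hM : 1 ≤ M) (hx : 0 ≤ x) (hy : 0 ≤ y)
    (hxy : M ≤ x → 1 / 2 ≤ y) (hyx : M ≤ y → 1 / 2 ≤ x) :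
    log⁺ x + log⁺ y ≤ log⁺ (x * y) + (2 * log M + log 2) := by
  have hlogM : 0 ≤ log M := log_nonneg hM
  have hlog2 : 0 ≤ log 2 := log_nonneg one_le_two
  rcases le_or_gt M x with hMx | hxM
  · linarith [posLog_add_posLog_le_posLog_mul_add_log_two (hM.trans hMx) (hxy hMx)]
  rcases le_or_gt M y with hMy | hyM
  · linarith [mul_comm x y ▸ posLog_add_posLog_le_posLog_mul_add_log_two (hM.trans hMy) (hyx hMy)]
  have hbound {t : ℝ} (ht : 0 ≤ t) (htM : t < M) : log⁺ t ≤ log M :=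
    (posLog_le_posLog ht htM.le).trans_eq (posLog_eq_log (by rwa [abs_of_nonneg (by linarith)]))
  linarith [hbound hx hxM, hbound hy hyM, posLog_nonneg (x := x * y)]

def NormBalanced {K : Type*} [Norm K] (M : ℝ) (x y : K) : Prop :=
  (M ≤ ‖x‖ → 1 / 2 ≤ ‖y‖) ∧ (M ≤ ‖y‖ → 1 / 2 ≤ ‖x‖)

namespace NormBalanced

variable {K : Type*} [NormedDivisionRing K] {M : ℝ} {x y : K}

lemma mul_add {c : K} (hM : 1 + 2 * ‖c‖ ≤ M) (h : NormBalanced M x y) :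
    NormBalanced M y (y * x + c) := by
  have hxy_le : ‖y * x + c‖ ≤ ‖y‖ * ‖x‖ + ‖c‖ := (norm_add_le _ _).trans_eq (by rw [norm_mul])
  have hxy_ge : ‖y‖ * ‖x‖ ≤ ‖y * x + c‖ + ‖c‖ := by
    rw [← norm_mul]; simpa using norm_sub_le (y * x + c) c
  constructor
  · intro hy
    by_contra! hsmall
    have hx : ‖x‖ < 1 / 2 := by
      by_contra! hx
      nlinarith [norm_nonneg c]
    exact absurd (h.2 hy) (not_le.2 hx)
  · intro hyx
    by_contra! hy
    have hx : ‖x‖ < M := by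
      by_contra! hx
      exact absurd (h.1 hx) (not_le.2 hy)
    nlinarith [norm_nonneg x, norm_nonneg y]

lemma abs_posLog_norm_mul_add_sub_le (hM : 1 ≤ M) (h : NormBalanced M x y) (c : K) :
    |log⁺ ‖y * x + c‖ - log⁺ ‖y‖ - log⁺ ‖x‖| ≤ 2 * log M + 2 * log 2 + log⁺ ‖c‖ := by
  have hupper : log⁺ ‖y * x + c‖ ≤ log⁺ ‖y‖ + log⁺ ‖x‖ + log⁺ ‖c‖ + log 2 := by
    grw [posLog_norm_add_le, norm_mul, posLog_mul]
  have hlower : log⁺ ‖y‖ + log⁺ ‖x‖ ≤ log⁺ ‖y * x + c‖ + log⁺ ‖c‖ + (2 * log M + 2 * log 2) := by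
    have := posLog_norm_add_le (y * x + c) (-c)
    rw [add_neg_cancel_right, norm_mul, norm_neg] at this
    linarith [posLog_add_posLog_le_posLog_mul_add hM (norm_nonneg y) (norm_nonneg x) h.2 h.1]
  rw [abs_le]
  constructor <;> linarith [log_nonneg hM, log_nonneg (one_le_two (α := ℝ))]

end NormBalanced

lemma normBalanced_of_mul_add_recurrence {K : Type*} [NormedDivisionRing K] {M : ℝ} {c : K}
    {a : ℕ → K} (hM : 1 + 2 * ‖c‖ ≤ M) (hrec : ∀ n, a (n + 2) = a (n + 1) * a n + c)
    (h0 : NormBalanced M (a 0) (a 1)) (n : ℕ) : NormBalanced M (a n) (a (n + 1)) := by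
  induction n with
  | zero => exact h0
  | succ n ih => exact hrec n ▸ ih.mul_add hM

lemma abs_posLog_norm_of_mul_add_recurrence_le {K : Type*} [NormedDivisionRing K] {M : ℝ}
    {c : K} {a : ℕ → K} (hM : 1 + 2 * ‖c‖ ≤ M) (hrec : ∀ n, a (n + 2) = a (n + 1) * a n + c)
    (h0 : NormBalanced M (a 0) (a 1)) (n : ℕ) :
    |log⁺ ‖a (n + 2)‖ - log⁺ ‖a (n + 1)‖ - log⁺ ‖a n‖| ≤ 2 * log M + 2 * log 2 + log⁺ ‖c‖ := by
  rw [hrec]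
  exact (normBalanced_of_mul_add_recurrence hM hrec h0 n).abs_posLog_norm_mul_add_sub_le
    (by linarith [norm_nonneg c]) c

lemma Asymptotics.IsBigO.exists_posLog_norm_le_add {α E F : Type*} [PseudoMetricSpace α]
    [ProperSpace α] [SeminormedAddCommGroup E] [Norm F] {φ : α → E} {ψ : α → F}
    (hφ : Continuous φ) (h : φ =O[cobounded α] ψ) :
    ∃ C, ∀ x, log⁺ ‖φ x‖ ≤ log⁺ ‖ψ x‖ + C := by
  obtain ⟨K, hK⟩ := h.bound
  have hbdd : IsBounded {x | ‖φ x‖ ≤ K * ‖ψ x‖}ᶜ := isBounded_compl_iff.2 hK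
  obtain ⟨B, hB⟩ := hbdd.isCompact_closure.exists_bound_of_continuousOn hφ.continuousOn
  refine ⟨log⁺ K + log⁺ B, fun x => ?_⟩
  by_cases hx : ‖φ x‖ ≤ K * ‖ψ x‖
  · grw [posLog_le_posLog (norm_nonneg _) hx, posLog_mul]
    linarith [posLog_nonneg (x := B)]
  · have hxB : ‖φ x‖ ≤ B := by simpa using hB x (subset_closure hx)
    grw [posLog_le_posLog (norm_nonneg _) hxB]
    linarith [posLog_nonneg (x := K), posLog_nonneg (x := ‖ψ x‖)]

namespace Polynomial

variable {K : Type*} [NormedField K] [ProperSpace K]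

lemma exists_abs_posLog_norm_eval_sub_le (f : K[X]) :
    ∃ C, ∀ z, |log⁺ ‖f.eval z‖ - f.natDegree * log⁺ ‖z‖| ≤ C := by
  rcases eq_or_ne f 0 with rfl | hf
  · exact ⟨0, by simp⟩
  have hequiv := f.isEquivalent_cobounded_leading_monomial
  have hlc : f.leadingCoeff ≠ 0 := leadingCoeff_ne_zero.2 hf
  obtain ⟨C₁, hC₁⟩ := (hequiv.isBigO.trans (isBigO_const_mul_self f.leadingCoeff
    (· ^ f.natDegree) _)).exists_posLog_norm_le_add f.continuous
  obtain ⟨C₂, hC₂⟩ := ((isBigO_self_const_mul hlc (· ^ f.natDegree) _).trans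
    hequiv.symm.isBigO).exists_posLog_norm_le_add (continuous_pow _)
  refine ⟨max C₁ C₂, fun z => abs_sub_le_iff.2 ⟨?_, ?_⟩⟩
  · have := hC₁ z
    simp only [norm_pow, posLog_pow] at this
    linarith [le_max_left C₁ C₂]
  · have := hC₂ z
    simp only [norm_pow, posLog_pow] at this
    linarith [le_max_right C₁ C₂]

lemma eventually_normBalanced_eval (f : K[X]) (hf : 0 < f.degree) :
    ∀ᶠ M in atTop, ∀ z, NormBalanced M z (f.eval z) := by
  have hlarge : ∀ᶠ M in atTop, ∀ z : K, M ≤ ‖z‖ → 1 / 2 ≤ ‖f.eval z‖ := by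
    have := (f.tendsto_norm_atTop hf tendsto_norm_cobounded_atTop).eventually_ge_atTop (1 / 2)
    rw [← comap_norm_atTop, eventually_comap, eventually_atTop] at this
    obtain ⟨R, hR⟩ := this
    exact eventually_atTop.2 ⟨R, fun M hM z hz => hR _ (hM.trans hz) z rfl⟩
  have hsmall : ∀ᶠ M in atTop, ∀ z : K, M ≤ ‖f.eval z‖ → 1 / 2 ≤ ‖z‖ := by
    obtain ⟨B, hB⟩ := (isCompact_closedBall (0 : K) (1 / 2)).exists_bound_of_continuousOn
      f.continuous.continuousOn
    filter_upwards [eventually_gt_atTop B] with M hM z hz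
    by_contra! hz'
    have := hB z (by simpa using hz'.le)
    linarith
  filter_upwards [hlarge, hsmall] with M hM₁ hM₂ z using ⟨hM₁ z, hM₂ z⟩

end Polynomial

lemma exists_tendstoUniformly_of_dist_le_summable {α E : Type*} [PseudoMetricSpace E]
    [CompleteSpace E] {v : ℕ → α → E} {a : ℕ → ℝ} (ha : Summable a)
    (h : ∀ n x, dist (v n x) (v (n + 1) x) ≤ a n) : ∃ g, TendstoUniformly v g atTop := by
  have hlim (x : α) : ∃ l, Tendsto (v · x) atTop (𝓝 l) :=
    cauchySeq_tendsto_of_complete (cauchySeq_of_dist_le_of_summable a (h · x) ha)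
  choose g hg using hlim
  refine ⟨g, Metric.tendstoUniformly_iff.2 fun ε hε => ?_⟩
  filter_upwards [(tendsto_sum_nat_add a).eventually (gt_mem_nhds hε)] with n hn x
  rw [dist_comm]
  refine lt_of_le_of_lt ?_ hn
  simpa only [add_comm n] using dist_le_tsum_of_dist_le_of_tendsto a (h · x) ha (hg x) n

namespace FibonacciLike

variable {d : ℕ → ℕ} (hrec : ∀ n, d (n + 2) = d (n + 1) + d n)
include hrec

lemma monotone (h01 : d 0 ≤ d 1) : Monotone d :=
  monotone_nat_of_le_succ fun n => by cases n <;> simp [hrec, h01]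

lemma le_two_mul (h01 : d 0 ≤ d 1) (n : ℕ) : d (n + 2) ≤ 2 * d (n + 1) := by
  have : d n ≤ d (n + 1) := monotone hrec h01 (by omega)
  rw [hrec]; omega

lemma succ_le_mul (h0 : 0 < d 0) (h01 : d 0 ≤ d 1) (n : ℕ) : d (n + 1) ≤ (d 1 + 1) * d n := by
  cases n with
  | zero => nlinarith
  | succ n => nlinarith [le_two_mul hrec h01 n]

lemma summable_one_div (h0 : 0 < d 0) (h01 : d 0 ≤ d 1) : Summable fun n => (1 : ℝ) / d n := by
  have hpos (n : ℕ) : (0 : ℝ) < d n := by exact_mod_cast h0.trans_le (monotone hrec h01 n.zero_le)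
  refine summable_of_ratio_norm_eventually_le (r := 2 / 3) (by norm_num)
    (eventually_atTop.2 ⟨2, fun n hn => ?_⟩)
  obtain ⟨m, rfl⟩ := Nat.exists_eq_add_of_le' hn
  have hm : (d (m + 2) : ℝ) ≤ 2 * d (m + 1) := by exact_mod_cast le_two_mul hrec h01 m
  have hrecm : (d (m + 2 + 1) : ℝ) = d (m + 2) + d (m + 1) := by exact_mod_cast hrec (m + 1)
  rw [Real.norm_of_nonneg (by have := hpos (m + 2 + 1); positivity),
    Real.norm_of_nonneg (by have := hpos (m + 2); positivity),
    mul_one_div, div_le_div_iff₀ (hpos _) (hpos _)]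
  linarith

lemma abs_mul_succ_sub_le {u : ℕ → ℝ} {A B : ℝ} (hu : ∀ n, |u (n + 2) - u (n + 1) - u n| ≤ A)
    (hB : |d 0 * u 1 - d 1 * u 0| ≤ B) (n : ℕ) :
    |d n * u (n + 1) - d (n + 1) * u n| ≤ B + A * d (n + 2) := by
  induction n with
  | zero =>
    have hA : 0 ≤ A := (abs_nonneg _).trans (hu 0)
    have : 0 ≤ A * (d 2 : ℝ) := by positivity
    linarith
  | succ n ih =>
    have hrec' : (d (n + 3) : ℝ) = d (n + 2) + d (n + 1) := by exact_mod_cast hrec (n + 1)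
    have hrec'' : (d (n + 2) : ℝ) = d (n + 1) + d n := by exact_mod_cast hrec n
    have key : d (n + 1) * u (n + 2) - d (n + 2) * u (n + 1) =
        d (n + 1) * (u (n + 2) - u (n + 1) - u n) - (d n * u (n + 1) - d (n + 1) * u n) := by
      rw [hrec'']; ring
    calc |d (n + 1) * u (n + 2) - d (n + 2) * u (n + 1)|
        ≤ d (n + 1) * |u (n + 2) - u (n + 1) - u n| + |d n * u (n + 1) - d (n + 1) * u n| := by
          rw [key]
          refine (abs_sub _ _).trans_eq ?_
          rw [abs_mul, Nat.abs_cast]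
      _ ≤ d (n + 1) * A + (B + A * d (n + 2)) := by gcongr; exact hu n
      _ = B + A * d (n + 3) := by rw [hrec']; ring

lemma abs_div_succ_sub_div_le (h0 : 0 < d 0) (h01 : d 0 ≤ d 1) {u : ℕ → ℝ} {A B : ℝ}
    (hu : ∀ n, |u (n + 2) - u (n + 1) - u n| ≤ A) (hB : |d 0 * u 1 - d 1 * u 0| ≤ B) (n : ℕ) :
    |1 / (d (n + 1) : ℝ) * u (n + 1) - 1 / (d n : ℝ) * u n| ≤ (B + (d 1 + 2) * A) / d (n + 1) := by
  have hpos (k : ℕ) : 0 < d k := h0.trans_le (monotone hrec h01 k.zero_le)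
  have hdn : (1 : ℝ) ≤ d n := by exact_mod_cast hpos n
  have hdn1 : (0 : ℝ) < d (n + 1) := by exact_mod_cast hpos (n + 1)
  have hA : 0 ≤ A := (abs_nonneg _).trans (hu 0)
  have hB0 : 0 ≤ B := (abs_nonneg _).trans hB
  have hratio : (d (n + 2) : ℝ) ≤ (d 1 + 2) * d n := by
    have := succ_le_mul hrec h0 h01 n
    exact_mod_cast (hrec n).trans_le (by nlinarith)
  calc |1 / (d (n + 1) : ℝ) * u (n + 1) - 1 / (d n : ℝ) * u n|
      = |d n * u (n + 1) - d (n + 1) * u n| / (d n * d (n + 1)) := by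
        rw [← abs_of_pos (by positivity : (0 : ℝ) < d n * d (n + 1)), ← abs_div]
        congr 1
        field_simp
    _ ≤ (B + A * d (n + 2)) / (d n * d (n + 1)) := by
        gcongr; exact abs_mul_succ_sub_le hrec hu hB n
    _ ≤ (B + (d 1 + 2) * A) * d n / (d n * d (n + 1)) := by gcongr; nlinarith
    _ = (B + (d 1 + 2) * A) / d (n + 1) := by field_simp

end FibonacciLike

theorem stmt6 (f : Polynomial ℂ) (hf : 0 < f.degree) (c : ℂ)
    (fs : ℕ → ℂ → ℂ)
    (h0 : ∀ z, fs 0 z = z) (h1 : ∀ z, fs 1 z = f.eval z)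
    (hrec : ∀ n z, fs (n + 2) z = fs (n + 1) z * fs n z + c)
    (d : ℕ → ℕ) (hd0 : d 0 = 1) (hd1 : d 1 = f.natDegree)
    (hdrec : ∀ n, d (n + 2) = d (n + 1) + d n) :
    (∃ C : ℝ, C > 0 ∧ ∀ n : ℕ, ∀ z : ℂ,
      |(1 / (d (n + 1) : ℝ)) * max (Real.log (‖fs (n + 1) z‖)) 0 -
        (1 / (d n : ℝ)) * max (Real.log (‖fs n z‖)) 0| ≤ C / (d (n + 1) : ℝ)) ∧
    ∃ g : ℂ → ℝ, TendstoUniformly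
      (fun (n : ℕ) (z : ℂ) => (1 / (d n : ℝ)) * max (Real.log (‖fs n z‖)) 0)
      g Filter.atTop := by
  have hd0_pos : 0 < d 0 := by rw [hd0]; exact one_pos
  have hd01 : d 0 ≤ d 1 := by rw [hd0, hd1]; exact Polynomial.natDegree_pos_iff_degree_pos.2 hf
  obtain ⟨B, hB⟩ := f.exists_abs_posLog_norm_eval_sub_le
  obtain ⟨M, hM_base, hM⟩ :=
    ((f.eventually_normBalanced_eval hf).and (eventually_ge_atTop (1 + 2 * ‖c‖))).exists
  have hstep (z : ℂ) := abs_posLog_norm_of_mul_add_recurrence_le (a := (fs · z)) hM (hrec · z)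
    (by simpa only [h0, h1] using hM_base z)
  have hbase (z : ℂ) : |d 0 * log⁺ ‖fs 1 z‖ - d 1 * log⁺ ‖fs 0 z‖| ≤ B := by
    simpa [hd0, hd1, h0, h1] using hB z
  simp only [max_comm _ (0 : ℝ), ← posLog_apply]
  set C := max (B + (d 1 + 2) * (2 * log M + 2 * log 2 + log⁺ ‖c‖)) 1
  have hdiff (n : ℕ) (z : ℂ) :
      |1 / (d (n + 1) : ℝ) * log⁺ ‖fs (n + 1) z‖ - 1 / (d n : ℝ) * log⁺ ‖fs n z‖| ≤
        C / d (n + 1) :=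
    (FibonacciLike.abs_div_succ_sub_div_le (u := (log⁺ ‖fs · z‖)) hdrec hd0_pos hd01
      (hstep z) (hbase z) n).trans
      (div_le_div_of_nonneg_right (le_max_left _ _) (Nat.cast_nonneg _))
  have hsum : Summable fun n => C / d (n + 1) := by
    simpa only [mul_one_div] using ((summable_nat_add_iff 1).2
      (FibonacciLike.summable_one_div hdrec hd0_pos hd01)).mul_left C
  refine ⟨⟨C, lt_max_of_lt_right one_pos, hdiff⟩,
    exists_tendstoUniformly_of_dist_le_summable hsum fun n z => ?_⟩
  rw [Real.dist_eq, abs_sub_comm]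
  exact hdiff n z
end

section
/- Let g_c(z) = lim_{n→∞} (1/d_n)·log₊|f_n(z)| be the Green's function of the Fibonacci system. Then g_c(z) = 0 if and only if z ∈ K_c, i.e., if and only if the sequence (f_n(z)) is bounded. -/
/-!
Write `a n = ‖f_n(z)‖` and `C = ‖c‖`, so that `|a (n + 2) - a (n + 1) * a n| ≤ C`. If `a` is
bounded, `log₊ (a n) / d n → 0` because `d n → ∞`. Otherwise some two consecutive terms are at
least `C + 4`: a term that large forces its neighbours to be small, and then it cannot exceed
`max (a k) (3C + 4)` where `k` is two steps back. From two such terms on, the sequence stays above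
`C + 4` and `u m = log (a (N + m) / 2)` satisfies `u (m + 2) ≥ u (m + 1) + u m`, so it dominates
`ε d (N + m)` with `ε = log 2 / d (N + 2)`, whence `g z ≥ ε > 0`.
-/

open Filter Topology Real

theorem mul_le_of_fib_recurrence {u D : ℕ → ℝ} {ε : ℝ}
    (hD : ∀ n, D (n + 2) = D (n + 1) + D n) (hu : ∀ n, u (n + 1) + u n ≤ u (n + 2))
    (h0 : ε * D 0 ≤ u 0) (h1 : ε * D 1 ≤ u 1) : ∀ n, ε * D n ≤ u n := by
  refine Nat.twoStepInduction h0 h1 fun n hn hn1 => ?_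
  rw [hD, mul_add]
  linarith [hu n]

section FibonacciRecurrence

variable {d : ℕ → ℕ}

theorem fib_le_of_fib_recurrence (hd0 : 0 < d 0) (hdrec : ∀ n, d (n + 2) = d (n + 1) + d n) :
    ∀ n, Nat.fib n ≤ d (n + 1) := by
  refine Nat.twoStepInduction (by simp) ?_ fun n hn hn1 => ?_
  · rw [hdrec, Nat.fib_one]
    omega
  · rw [Nat.fib_add_two, hdrec (n + 1)]
    omega

theorem pos_of_fib_recurrence (hd0 : 0 < d 0) (hdrec : ∀ n, d (n + 2) = d (n + 1) + d n)
    (n : ℕ) : 0 < d (n + 2) :=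
  (Nat.fib_pos.mpr n.succ_pos).trans_le (fib_le_of_fib_recurrence hd0 hdrec (n + 1))

theorem tendsto_atTop_of_fib_recurrence (hd0 : 0 < d 0)
    (hdrec : ∀ n, d (n + 2) = d (n + 1) + d n) : Tendsto (fun n => (d n : ℝ)) atTop atTop := by
  refine tendsto_natCast_atTop_atTop.comp ((tendsto_add_atTop_iff_nat 3).mp ?_)
  exact tendsto_atTop_mono (fun n => fib_le_of_fib_recurrence hd0 hdrec (n + 2))
    Nat.fib_add_two_strictMono.tendsto_atTop

end FibonacciRecurrence

section NearProducts

variable {a : ℕ → ℝ} {C : ℝ}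

theorem le_max_of_near_product (ha : ∀ n, 0 ≤ a n)
    (hC : ∀ n, |a (n + 2) - a (n + 1) * a n| ≤ C)
    (hnext : ∀ n, C + 4 ≤ a n → a (n + 1) < C + 4) (k : ℕ) :
    a (k + 2) ≤ max (a k) (3 * C + 4) := by
  have hC0 : 0 ≤ C := (abs_nonneg _).trans (hC 0)
  rcases lt_or_ge (a (k + 2)) (C + 4) with hsmall | hbig
  · exact le_max_of_le_right (by linarith)
  have hprod : a (k + 2) * a (k + 1) < 2 * C + 4 := by
    linarith [(abs_le.mp (hC (k + 1))).1, hnext _ hbig]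
  have hstep : a (k + 2) - C ≤ a (k + 1) * a k := by linarith [(abs_le.mp (hC k)).2]
  -- `a (k + 2) * (a (k + 2) - C) ≤ a (k + 2) * a (k + 1) * a k ≤ (2C + 4) a k`
  by_contra! hgt
  rw [max_lt_iff] at hgt
  nlinarith [mul_le_mul_of_nonneg_left hstep (ha (k + 2)),
    mul_le_mul_of_nonneg_right hprod.le (ha k), ha k]

theorem bddAbove_of_near_product (ha : ∀ n, 0 ≤ a n)
    (hC : ∀ n, |a (n + 2) - a (n + 1) * a n| ≤ C)
    (hnext : ∀ n, C + 4 ≤ a n → a (n + 1) < C + 4) : BddAbove (Set.range a) := by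
  refine ⟨max (max (a 0) (a 1)) (3 * C + 4), Set.forall_mem_range.mpr ?_⟩
  refine Nat.twoStepInduction (by simp) (by simp) fun n hn _ => ?_
  exact (le_max_of_near_product ha hC hnext n).trans (max_le hn (le_max_right _ _))

theorem le_of_near_product_of_two_large (hC : ∀ n, |a (n + 2) - a (n + 1) * a n| ≤ C) {N : ℕ}
    (hN : C + 4 ≤ a N) (hN1 : C + 4 ≤ a (N + 1)) : ∀ m, C + 4 ≤ a (N + m) := by
  have hC0 : 0 ≤ C := (abs_nonneg _).trans (hC 0)
  refine Nat.twoStepInduction hN hN1 fun m hm hm1 => ?_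
  have hlow : a (N + (m + 1)) * a (N + m) - C ≤ a (N + (m + 2)) := by
    have h := (abs_le.mp (hC (N + m))).1
    rw [← add_assoc, ← add_assoc]
    linarith
  nlinarith [mul_le_mul hm1 hm (by linarith) (by linarith)]

theorem log_half_add_le_of_near_product (hC : ∀ n, |a (n + 2) - a (n + 1) * a n| ≤ C) {n : ℕ}
    (hn : C + 4 ≤ a n) (hn1 : C + 4 ≤ a (n + 1)) :
    log (a (n + 1) / 2) + log (a n / 2) ≤ log (a (n + 2) / 2) := by
  have hC0 : 0 ≤ C := (abs_nonneg _).trans (hC 0)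
  rw [← log_mul (by linarith) (by linarith)]
  refine log_le_log (by nlinarith) ?_
  nlinarith [(abs_le.mp (hC n)).1, mul_le_mul hn1 hn (by linarith) (by linarith)]

end NearProducts

theorem tendsto_div_posLog_of_bddAbove {a D : ℕ → ℝ} (hD : Tendsto D atTop atTop)
    (ha : ∀ n, 0 ≤ a n) (hb : BddAbove (Set.range a)) :
    Tendsto (fun n => 1 / D n * max (log (a n)) 0) atTop (𝓝 0) := by
  obtain ⟨M, hM⟩ := hb
  refine (tendsto_const_nhds.div_atTop hD).zero_mul_isBoundedUnder_le
    (isBoundedUnder_of ⟨log⁺ M, fun n => ?_⟩)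
  rw [Function.comp_apply, norm_of_nonneg (le_max_right _ _), max_comm]
  exact posLog_le_posLog (ha n) (hM ⟨n, rfl⟩)

theorem mul_le_log_half_of_two_large {a : ℕ → ℝ} {C : ℝ} {d : ℕ → ℕ}
    (hC : ∀ n, |a (n + 2) - a (n + 1) * a n| ≤ C) (hdrec : ∀ n, d (n + 2) = d (n + 1) + d n)
    {N : ℕ} (hN : C + 4 ≤ a N) (hN1 : C + 4 ≤ a (N + 1)) (hdN : (0 : ℝ) < d (N + 2)) :
    ∀ m, log 2 / d (N + 2) * d (N + m) ≤ log (a (N + m) / 2) := by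
  have hC0 : 0 ≤ C := (abs_nonneg _).trans (hC 0)
  have hlarge := le_of_near_product_of_two_large hC hN hN1
  have hinit : ∀ m, d (N + m) ≤ d (N + 2) →
      log 2 / d (N + 2) * d (N + m) ≤ log (a (N + m) / 2) := fun m hm => calc
    log 2 / d (N + 2) * d (N + m) ≤ log 2 / d (N + 2) * d (N + 2) :=
      mul_le_mul_of_nonneg_left (by exact_mod_cast hm) (div_pos (log_pos one_lt_two) hdN).le
    _ = log 2 := div_mul_cancel₀ _ hdN.ne'
    _ ≤ log (a (N + m) / 2) := log_le_log two_pos (by linarith [hlarge m])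
  have hdN2 : d N ≤ d (N + 2) ∧ d (N + 1) ≤ d (N + 2) := by
    rw [hdrec]
    omega
  exact mul_le_of_fib_recurrence (D := fun m => (d (N + m) : ℝ))
    (fun m => by exact_mod_cast hdrec (N + m))
    (fun m => log_half_add_le_of_near_product hC (hlarge m) (hlarge (m + 1)))
    (hinit 0 hdN2.1) (hinit 1 hdN2.2)

theorem pos_of_tendsto_div_posLog_of_two_large {a : ℕ → ℝ} {C : ℝ} {d : ℕ → ℕ} {L : ℝ}
    (hC : ∀ n, |a (n + 2) - a (n + 1) * a n| ≤ C)
    (hd0 : 0 < d 0) (hdrec : ∀ n, d (n + 2) = d (n + 1) + d n)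
    (hL : Tendsto (fun n => 1 / (d n : ℝ) * max (log (a n)) 0) atTop (𝓝 L))
    {N : ℕ} (hN : C + 4 ≤ a N) (hN1 : C + 4 ≤ a (N + 1)) : 0 < L := by
  have hC0 : 0 ≤ C := (abs_nonneg _).trans (hC 0)
  have hdpos : ∀ k, (0 : ℝ) < d (N + (k + 2)) := fun k => by
    exact_mod_cast pos_of_fib_recurrence hd0 hdrec (N + k)
  have hcmp := mul_le_log_half_of_two_large hC hdrec hN hN1 (hdpos 0)
  have hlarge := le_of_near_product_of_two_large hC hN hN1
  refine (div_pos (log_pos one_lt_two) (hdpos 0)).trans_le (ge_of_tendsto hL ?_)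
  filter_upwards [eventually_ge_atTop (N + 2)] with n hn
  obtain ⟨k, rfl⟩ : ∃ k, n = N + (k + 2) := ⟨n - (N + 2), by omega⟩
  rw [one_div_mul_eq_div, le_div_iff₀ (hdpos k)]
  calc log 2 / d (N + 2) * d (N + (k + 2)) ≤ log (a (N + (k + 2)) / 2) := hcmp (k + 2)
    _ ≤ log (a (N + (k + 2))) :=
      log_le_log (by linarith [hlarge (k + 2)]) (by linarith [hlarge (k + 2)])
    _ ≤ max (log (a (N + (k + 2)))) 0 := le_max_left _ _

theorem stmt9_general (c : ℂ)
    (fs : ℕ → ℂ → ℂ)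
    (hrec : ∀ n z, fs (n + 2) z = fs (n + 1) z * fs n z + c)
    (d : ℕ → ℕ) (hd0 : d 0 = 1)
    (hdrec : ∀ n, d (n + 2) = d (n + 1) + d n)
    (g : ℂ → ℝ)
    (hg : ∀ z, Filter.Tendsto
      (fun n : ℕ => (1 / (d n : ℝ)) * max (Real.log ‖fs n z‖) 0)
      Filter.atTop (nhds (g z))) :
    ∀ z : ℂ, g z = 0 ↔ BddAbove (Set.range fun n => ‖fs n z‖) := by
  intro z
  have hd0' : 0 < d 0 := hd0 ▸ Nat.one_pos
  have hnear : ∀ n, |‖fs (n + 2) z‖ - ‖fs (n + 1) z‖ * ‖fs n z‖| ≤ ‖c‖ := fun n => by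
    simpa [hrec, norm_mul] using
      abs_norm_sub_norm_le (fs (n + 1) z * fs n z + c) (fs (n + 1) z * fs n z)
  constructor
  · intro hgz
    by_contra hunb
    obtain ⟨N, hN, hN1⟩ : ∃ N, ‖c‖ + 4 ≤ ‖fs N z‖ ∧ ‖c‖ + 4 ≤ ‖fs (N + 1) z‖ := by
      by_contra! hsmall
      exact hunb (bddAbove_of_near_product (fun n => norm_nonneg _) hnear hsmall)
    exact (pos_of_tendsto_div_posLog_of_two_large hnear hd0' hdrec (hg z) hN hN1).ne' hgz
  · intro hb
    exact tendsto_nhds_unique (hg z) (tendsto_div_posLog_of_bddAbove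
      (tendsto_atTop_of_fib_recurrence hd0' hdrec) (fun n => norm_nonneg _) hb)

theorem stmt9 (f : Polynomial ℂ) (hf : 0 < f.degree) (c : ℂ)
    (fs : ℕ → ℂ → ℂ)
    (h0 : ∀ z, fs 0 z = z) (h1 : ∀ z, fs 1 z = f.eval z)
    (hrec : ∀ n z, fs (n + 2) z = fs (n + 1) z * fs n z + c)
    (d : ℕ → ℕ) (hd0 : d 0 = 1) (hd1 : d 1 = f.natDegree)
    (hdrec : ∀ n, d (n + 2) = d (n + 1) + d n)
    (g : ℂ → ℝ)
    (hg : ∀ z, Filter.Tendsto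
      (fun n : ℕ => (1 / (d n : ℝ)) * max (Real.log ‖fs n z‖) 0)
      Filter.atTop (nhds (g z))) :
    ∀ z : ℂ, g z = 0 ↔ BddAbove (Set.range fun n => ‖fs n z‖) :=
  stmt9_general c fs hrec d hd0 hdrec g hg
end

section
/- Let f be a polynomial with f(0) = 0 and f'(0) = 0, c ∈ ℂ with |c| > 2, and f_n the associated Fibonacci system. Then for all n ≥ 4, |f_n(0)| ≥ (|c| − 1)·|f_{n-1}(0)|; in particular the sequence (f_n(0)) is unbounded and 0 ∉ K_c. -/
/-!
Put `r = ‖c‖ > 2`. If `‖x‖ ≥ r` and `‖y‖ ≥ r` then `‖y x + c‖ ≥ ‖y‖ ‖x‖ - r ≥ (r - 1) ‖y‖ ≥ r`,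
so once two consecutive terms of `f_{n+2} = f_{n+1} f_n + c` have norm at least `r`, every later
term does and each grows by a factor at least `r - 1 > 1`. At `z = 0` this starts with
`f_2(0) = f_3(0) = c`, because `f_1(0) = f(0) = 0`.
-/

open Filter

section Recurrence

variable {𝕜 : Type*} [NormedDivisionRing 𝕜] {c : 𝕜}

lemma sub_one_mul_norm_le_norm_mul_add {x y : 𝕜} (hx : ‖c‖ ≤ ‖x‖) (hy : ‖c‖ ≤ ‖y‖) :
    (‖c‖ - 1) * ‖y‖ ≤ ‖y * x + c‖ := by
  have h := norm_sub_le_norm_add (y * x) c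
  rw [norm_mul] at h
  nlinarith [mul_le_mul_of_nonneg_left hx (norm_nonneg y)]

variable {a : ℕ → 𝕜}

lemma norm_le_of_recurrence (hc : 2 ≤ ‖c‖) (ha : ∀ n, a (n + 2) = a (n + 1) * a n + c)
    (h0 : ‖c‖ ≤ ‖a 0‖) (h1 : ‖c‖ ≤ ‖a 1‖) (n : ℕ) : ‖c‖ ≤ ‖a n‖ := by
  induction n using Nat.twoStepInduction with
  | zero => exact h0
  | one => exact h1
  | more n hn hn1 =>
    rw [ha]
    calc ‖c‖ ≤ (‖c‖ - 1) * ‖c‖ := by nlinarith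
      _ ≤ (‖c‖ - 1) * ‖a (n + 1)‖ := by gcongr; linarith
      _ ≤ ‖a (n + 1) * a n + c‖ := sub_one_mul_norm_le_norm_mul_add hn hn1

lemma sub_one_mul_norm_le_of_recurrence (hc : 2 ≤ ‖c‖)
    (ha : ∀ n, a (n + 2) = a (n + 1) * a n + c)
    (h0 : ‖c‖ ≤ ‖a 0‖) (h1 : ‖c‖ ≤ ‖a 1‖) (n : ℕ) :
    (‖c‖ - 1) * ‖a (n + 1)‖ ≤ ‖a (n + 2)‖ := by
  have hle := norm_le_of_recurrence hc ha h0 h1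
  rw [ha]
  exact sub_one_mul_norm_le_norm_mul_add (hle n) (hle (n + 1))

end Recurrence

theorem stmt11_general (f : Polynomial ℂ) (hf0 : f.eval 0 = 0)
    (c : ℂ) (hc : ‖c‖ > 2)
    (fs : ℕ → ℂ → ℂ)
    (h0 : ∀ z, fs 0 z = z) (h1 : ∀ z, fs 1 z = f.eval z)
    (hrec : ∀ n z, fs (n + 2) z = fs (n + 1) z * fs n z + c) :
    (∀ n : ℕ, 4 ≤ n →
      ‖fs n 0‖ ≥ (‖c‖ - 1) * ‖fs (n - 1) 0‖) ∧
    ¬ BddAbove (Set.range fun n => ‖fs n 0‖) := by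
  have hfs2 : fs 2 0 = c := by rw [hrec, h0]; ring
  have hfs3 : fs 3 0 = c := by rw [hrec, h1, hf0, hfs2]; ring
  have hgrowth := sub_one_mul_norm_le_of_recurrence (a := fun n => fs (n + 2) 0) hc.le
    (fun n => hrec (n + 2) 0) (by rw [hfs2]) (by rw [hfs3])
  refine ⟨fun n hn => ?_, ?_⟩
  · obtain ⟨m, rfl⟩ := Nat.exists_eq_add_of_le' hn
    exact hgrowth m
  · have htendsto : Tendsto (fun n => ‖fs (n + 3) 0‖) atTop atTop :=
      tendsto_atTop_of_geom_le (by rw [hfs3]; linarith) (by linarith) hgrowth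
    exact not_bddAbove_of_tendsto_atTop ((tendsto_add_atTop_iff_nat 3).mp htendsto)

theorem stmt11 (f : Polynomial ℂ) (hf0 : f.eval 0 = 0) (hf1 : f.derivative.eval 0 = 0)
    (c : ℂ) (hc : ‖c‖ > 2)
    (fs : ℕ → ℂ → ℂ)
    (h0 : ∀ z, fs 0 z = z) (h1 : ∀ z, fs 1 z = f.eval z)
    (hrec : ∀ n z, fs (n + 2) z = fs (n + 1) z * fs n z + c) :
    (∀ n : ℕ, 4 ≤ n →
      ‖fs n 0‖ ≥ (‖c‖ - 1) * ‖fs (n - 1) 0‖) ∧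
    ¬ BddAbove (Set.range fun n => ‖fs n 0‖) :=
  stmt11_general f hf0 c hc fs h0 h1 hrec
end

section
/- Let f_1(z) = z (so f_0(z)=z, f_1(z)=z, f_{n+2}=f_{n+1}f_n+c) and let c be a real number with c < −2. Then for every purely imaginary number ix (x ∈ ℝ), the sequence (f_n(ix)) is unbounded; i.e., the imaginary axis does not meet K_c. Moreover −1 ∈ K_c and the positive real fixed point z₀ = (1+√(1−4c))/2 is in K_c, so K_c is disconnected. -/
/-!
On the imaginary axis `f₂(ix) = c - x²` is real and `Re f₃(ix) = c`, so `|f₂|, |f₃| ≥ -c > 2`.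
From `|f_{n+2}| ≥ |f_{n+1}| |f_n| + c` the moduli then stay above `-c` and increase by at least
`-c (-c - 2) > 0` at each step, so the orbit escapes. In contrast `-1` and the fixed point `z₀` have
bounded orbits: the pair `(f_{n+1}, f_n)` is the `n`-th iterate of `(z, z)` under the map
`H_c (x, y) = (x y + c, x)`, for which `(-1, -1)` has period three and `(z₀, z₀)` is fixed.
Since `K_c` misses the imaginary axis but meets both half planes, it is disconnected.
-/

open Complex Set

/-- The map `H_c` of the paper. -/
def fibonacciStep (c : ℂ) (p : ℂ × ℂ) : ℂ × ℂ := (p.1 * p.2 + c, p.1)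

lemma not_bddAbove_range_of_le_mul_sub {a : ℕ → ℝ} {K : ℝ} (hK : 2 < K) (h0 : K ≤ a 0)
    (h1 : K ≤ a 1) (ha : ∀ n, a (n + 1) * a n - K ≤ a (n + 2)) : ¬ BddAbove (range a) := by
  have hge : ∀ n, K ≤ a n ∧ K ≤ a (n + 1) := by
    intro n
    induction n with
    | zero => exact ⟨h0, h1⟩
    | succ n ih =>
      exact ⟨ih.2, by nlinarith [ha n, mul_le_mul ih.2 ih.1 (by linarith) (by linarith)]⟩
  have hinc (n : ℕ) : a (n + 1) + K * (K - 2) ≤ a (n + 2) := by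
    obtain ⟨hn, hn1⟩ := hge n
    nlinarith [ha n, mul_le_mul_of_nonneg_left hn (by linarith : 0 ≤ a (n + 1))]
  have hlin : ∀ n : ℕ, a 1 + n * (K * (K - 2)) ≤ a (n + 1) := by
    intro n
    induction n with
    | zero => simp
    | succ n ih => push_cast; linarith [hinc n]
  rintro ⟨M, hM⟩
  have hδ : 0 < K * (K - 2) := by nlinarith
  obtain ⟨n, hn⟩ := exists_nat_gt ((M - a 1) / (K * (K - 2)))
  rw [div_lt_iff₀ hδ] at hn
  linarith [hM ⟨n + 1, rfl⟩, hlin n]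

section Recurrence

variable {c : ℂ} {f : ℕ → ℂ} (hf : ∀ n, f (n + 2) = f (n + 1) * f n + c)
include hf

lemma norm_mul_sub_norm_le_norm (n : ℕ) : ‖f (n + 1)‖ * ‖f n‖ - ‖c‖ ≤ ‖f (n + 2)‖ := by
  rw [hf, ← norm_mul]
  simpa using norm_sub_norm_le (f (n + 1) * f n) (-c)

lemma fibonacciStep_iterate (n : ℕ) :
    (fibonacciStep c)^[n] (f 1, f 0) = (f (n + 1), f n) := by
  induction n with
  | zero => rfl
  | succ n ih => rw [Function.iterate_succ_apply', ih, fibonacciStep, ← hf]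

lemma bddAbove_range_norm_of_mapsTo {P : Set (ℂ × ℂ)} (hP : P.Finite)
    (hmaps : MapsTo (fibonacciStep c) P P) (hstart : (f 1, f 0) ∈ P) :
    BddAbove (range fun n => ‖f n‖) := by
  refine ((hP.image fun p => ‖p.2‖).bddAbove).mono ?_
  rintro _ ⟨n, rfl⟩
  exact ⟨_, hmaps.iterate n hstart, by rw [fibonacciStep_iterate hf]⟩

end Recurrence

lemma mapsTo_fibonacciStep_period_three (c : ℂ) :
    MapsTo (fibonacciStep c) {(-1, -1), (1 + c, -1), (-1, 1 + c)}
      {(-1, -1), (1 + c, -1), (-1, 1 + c)} := by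
  rintro p (rfl | rfl | rfl) <;> simp only [fibonacciStep, mem_insert_iff, mem_singleton_iff,
    Prod.mk.injEq] <;> ring_nf <;> simp

lemma mapsTo_fibonacciStep_fixed {c w : ℂ} (hw : w * w + c = w) :
    MapsTo (fibonacciStep c) {(w, w)} {(w, w)} := by
  rintro p rfl
  simp [fibonacciStep, hw]

lemma not_bddAbove_range_norm_of_imaginary {c : ℝ} (hc : c < -2) (x : ℝ) {f : ℕ → ℂ}
    (h0 : f 0 = x * I) (h1 : f 1 = x * I) (hf : ∀ n, f (n + 2) = f (n + 1) * f n + c) :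
    ¬ BddAbove (range fun n => ‖f n‖) := by
  have h2 : f 2 = ((c - x ^ 2 : ℝ) : ℂ) := by
    rw [hf, h0, h1]; push_cast; ring_nf; rw [I_sq]; ring
  have h3 : (f 3).re = c := by
    rw [hf, h2, h1, ← mul_assoc, ← ofReal_mul, add_re, re_ofReal_mul, I_re, mul_zero, ofReal_re,
      zero_add]
  have hc2 : -c ≤ ‖f 2‖ := by
    rw [h2, norm_real, Real.norm_eq_abs, abs_of_neg (by nlinarith)]
    nlinarith
  have hc3 : -c ≤ ‖f 3‖ := by
    simpa [h3, abs_of_neg (by linarith : c < 0)] using abs_re_le_norm (f 3)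
  have hnc : ‖(c : ℂ)‖ = -c := by
    rw [norm_real, Real.norm_eq_abs, abs_of_neg (by linarith)]
  intro hbdd
  refine not_bddAbove_range_of_le_mul_sub (a := fun n => ‖f (n + 2)‖) (K := -c) (by linarith)
    hc2 hc3 (fun n => ?_) (hbdd.mono ?_)
  · have h := norm_mul_sub_norm_le_norm hf (n + 2)
    rw [hnc] at h
    exact h
  · rintro _ ⟨n, rfl⟩
    exact ⟨n + 2, rfl⟩

lemma not_isPreconnected_of_forall_mul_I_notMem {S : Set ℂ} (hS : ∀ x : ℝ, (x * I : ℂ) ∉ S)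
    {u v : ℂ} (hu : u ∈ S) (hv : v ∈ S) (hu0 : u.re < 0) (hv0 : 0 < v.re) :
    ¬ IsPreconnected S := by
  intro hpre
  obtain ⟨z, hz, hz0⟩ := (hpre.image re continuous_re.continuousOn).Icc_subset
    (mem_image_of_mem re hu) (mem_image_of_mem re hv) ⟨hu0.le, hv0.le⟩
  refine hS z.im ?_
  convert hz
  apply Complex.ext <;> simp [hz0]

lemma one_add_sqrt_div_two_mul_self_add {c : ℝ} (hc : c ≤ 1 / 4) :
    (1 + √(1 - 4 * c)) / 2 * ((1 + √(1 - 4 * c)) / 2) + c = (1 + √(1 - 4 * c)) / 2 := by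
  nlinarith [Real.sq_sqrt (by linarith : 0 ≤ 1 - 4 * c)]

theorem stmt12 (c : ℝ) (hc : c < -2)
    (fs : ℕ → ℂ → ℂ)
    (h0 : ∀ z, fs 0 z = z) (h1 : ∀ z, fs 1 z = z)
    (hrec : ∀ n z, fs (n + 2) z = fs (n + 1) z * fs n z + (c : ℂ)) :
    (∀ x : ℝ, ¬ BddAbove (Set.range fun n => ‖fs n (x * Complex.I)‖)) ∧
    (-1 : ℂ) ∈ {z : ℂ | BddAbove (Set.range fun n => ‖fs n z‖)} ∧
    (((1 + Real.sqrt (1 - 4 * c)) / 2 : ℝ) : ℂ) ∈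
      {z : ℂ | BddAbove (Set.range fun n => ‖fs n z‖)} ∧
    ¬ IsPreconnected {z : ℂ | BddAbove (Set.range fun n => ‖fs n z‖)} := by
  have himag (x : ℝ) : ¬ BddAbove (range fun n => ‖fs n (x * I)‖) :=
    not_bddAbove_range_norm_of_imaginary hc x (h0 _) (h1 _) (hrec · _)
  have hneg : BddAbove (range fun n => ‖fs n (-1)‖) :=
    bddAbove_range_norm_of_mapsTo (hrec · _) (toFinite _) (mapsTo_fibonacciStep_period_three c)
      (by simp [h0, h1])
  set w : ℝ := (1 + √(1 - 4 * c)) / 2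
  have hfix : (w : ℂ) * w + c = w := by
    exact_mod_cast one_add_sqrt_div_two_mul_self_add (by linarith)
  have hw : BddAbove (range fun n => ‖fs n w‖) :=
    bddAbove_range_norm_of_mapsTo (hrec · _) (toFinite _) (mapsTo_fibonacciStep_fixed hfix)
      (by simp [h0, h1])
  have hw0 : 0 < w := by positivity
  exact ⟨himag, hneg, hw,
    not_isPreconnected_of_forall_mul_I_notMem himag hneg hw (by simp) (by simpa using hw0)⟩
end

section
/- Assume f(0)=f'(0)=0. Then M₀ = {c ∈ ℂ : (f_n(0)) is bounded} is contained in the closed disk of radius 2: for any c with |c| > 2, the sequence (f_n(0)) is unbounded. Combined with the inclusion D(0,1/4) ⊂ M₀, one gets D(0,1/4) ⊂ M₀ ⊂ D(0,2). -/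
/-!
Write `a₀, a₁, …` for the orbit `f_n(0)`, so that `a₀ = a₁ = 0` and `a_{n+2} = a_{n+1} a_n + c`.
If `|c| < 1/4`, the bound `|a_n| ≤ 1/2` propagates, since `(1/2)² + 1/4 = 1/2`.
If `r = |c| > 2`, then `a₂ = a₃ = c`, and once two consecutive terms have modulus at least `r`,
`|a_{n+2}| ≥ |a_{n+1}| r - r ≥ (r - 1) |a_{n+1}|`, so the orbit grows like `(r - 1)^n`.
-/

open Filter

section ProductRecurrence

variable {𝕜 : Type*} {a : ℕ → 𝕜} {c : 𝕜}

theorem norm_le_half_of_mul_add_rec [SeminormedRing 𝕜]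
    (ha : ∀ n, a (n + 2) = a (n + 1) * a n + c)
    (h0 : ‖a 0‖ ≤ 1 / 2) (h1 : ‖a 1‖ ≤ 1 / 2) (hc : ‖c‖ ≤ 1 / 4) (n : ℕ) :
    ‖a n‖ ≤ 1 / 2 := by
  suffices ∀ n, ‖a n‖ ≤ 1 / 2 ∧ ‖a (n + 1)‖ ≤ 1 / 2 from (this n).1
  intro n
  induction n with
  | zero => exact ⟨h0, h1⟩
  | succ m ih =>
    obtain ⟨hm, hm1⟩ := ih
    refine ⟨hm1, ?_⟩
    calc ‖a (m + 2)‖ ≤ ‖a (m + 1)‖ * ‖a m‖ + ‖c‖ := by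
          rw [ha]; exact (norm_add_le _ _).trans (add_le_add_left (norm_mul_le _ _) _)
      _ ≤ 1 / 2 := by nlinarith [norm_nonneg (a m), norm_nonneg (a (m + 1))]

variable [NormedDivisionRing 𝕜]

theorem sub_one_mul_norm_le_of_mul_add_rec (ha : ∀ n, a (n + 2) = a (n + 1) * a n + c) {n : ℕ}
    (hn : ‖c‖ ≤ ‖a n‖) (hn1 : ‖c‖ ≤ ‖a (n + 1)‖) :
    (‖c‖ - 1) * ‖a (n + 1)‖ ≤ ‖a (n + 2)‖ := by
  have h := norm_sub_le_norm_add (a (n + 1) * a n) c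
  rw [norm_mul, ← ha] at h
  have := mul_le_mul_of_nonneg_left hn (norm_nonneg (a (n + 1)))
  linarith

theorem norm_mul_sub_one_pow_le_of_mul_add_rec (ha : ∀ n, a (n + 2) = a (n + 1) * a n + c)
    (h0 : ‖c‖ ≤ ‖a 0‖) (h1 : ‖c‖ ≤ ‖a 1‖) (hc : 2 ≤ ‖c‖) (n : ℕ) :
    ‖c‖ * (‖c‖ - 1) ^ n ≤ ‖a (n + 1)‖ := by
  suffices ∀ n, ‖c‖ ≤ ‖a n‖ ∧ ‖c‖ * (‖c‖ - 1) ^ n ≤ ‖a (n + 1)‖ from (this n).2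
  intro n
  induction n with
  | zero => simpa using ⟨h0, h1⟩
  | succ m ih =>
    obtain ⟨hm, hm1⟩ := ih
    have hc_le : ‖c‖ ≤ ‖a (m + 1)‖ :=
      (le_mul_of_one_le_right (by linarith) (one_le_pow₀ (by linarith))).trans hm1
    refine ⟨hc_le, ?_⟩
    calc ‖c‖ * (‖c‖ - 1) ^ (m + 1) = (‖c‖ - 1) * (‖c‖ * (‖c‖ - 1) ^ m) := by ring
      _ ≤ (‖c‖ - 1) * ‖a (m + 1)‖ := mul_le_mul_of_nonneg_left hm1 (by linarith)
      _ ≤ ‖a (m + 2)‖ := sub_one_mul_norm_le_of_mul_add_rec ha hm hc_le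

theorem tendsto_norm_atTop_of_mul_add_rec (ha : ∀ n, a (n + 2) = a (n + 1) * a n + c)
    (h0 : ‖c‖ ≤ ‖a 0‖) (h1 : ‖c‖ ≤ ‖a 1‖) (hc : 2 < ‖c‖) :
    Tendsto (fun n => ‖a n‖) atTop atTop := by
  rw [← tendsto_add_atTop_iff_nat 1]
  refine tendsto_atTop_mono (norm_mul_sub_one_pow_le_of_mul_add_rec ha h0 h1 hc.le) ?_
  exact (tendsto_pow_atTop_atTop_of_one_lt (by linarith)).const_mul_atTop (by linarith)

end ProductRecurrence

theorem stmt14_general (f : Polynomial ℂ) (hf0 : f.eval 0 = 0)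
    (fs : ℂ → ℕ → ℂ → ℂ)
    (h0 : ∀ c z, fs c 0 z = z) (h1 : ∀ c z, fs c 1 z = f.eval z)
    (hrec : ∀ c n z, fs c (n + 2) z = fs c (n + 1) z * fs c n z + c) :
    (∀ c : ℂ, 2 < ‖c‖ →
      ¬ BddAbove (Set.range fun n => ‖fs c n 0‖)) ∧
    Metric.ball (0 : ℂ) (1 / 4) ⊆
      {c : ℂ | BddAbove (Set.range fun n => ‖fs c n 0‖)} ∧
    {c : ℂ | BddAbove (Set.range fun n => ‖fs c n 0‖)} ⊆
      Metric.closedBall (0 : ℂ) 2 := by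
  have orbit0 (c : ℂ) : fs c 0 0 = 0 := h0 c 0
  have orbit1 (c : ℂ) : fs c 1 0 = 0 := by rw [h1, hf0]
  have orbit2 (c : ℂ) : fs c 2 0 = c := by rw [hrec, orbit1, orbit0, zero_mul, zero_add]
  have orbit3 (c : ℂ) : fs c 3 0 = c := by rw [hrec, orbit2, orbit1, mul_zero, zero_add]
  have escape (c : ℂ) (hc : 2 < ‖c‖) : ¬ BddAbove (Set.range fun n => ‖fs c n 0‖) := by
    refine not_bddAbove_of_tendsto_atTop ((tendsto_add_atTop_iff_nat 2).1 ?_)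
    exact tendsto_norm_atTop_of_mul_add_rec (a := fun n => fs c (n + 2) 0) (fun n => hrec c (n + 2) 0)
      (by rw [orbit2]) (by rw [orbit3]) hc
  refine ⟨escape, fun c hc => ?_, fun c hc => ?_⟩
  · rw [mem_ball_zero_iff] at hc
    refine ⟨1 / 2, Set.forall_mem_range.2 fun n => ?_⟩
    exact norm_le_half_of_mul_add_rec (a := fun n => fs c n 0) (fun n => hrec c n 0)
      (by simp [orbit0]) (by simp [orbit1]) hc.le n
  · rw [mem_closedBall_zero_iff]
    exact not_lt.1 fun h => escape c h hc

theorem stmt14 (f : Polynomial ℂ) (hf0 : f.eval 0 = 0) (hf1 : f.derivative.eval 0 = 0)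
    (fs : ℂ → ℕ → ℂ → ℂ)
    (h0 : ∀ c z, fs c 0 z = z) (h1 : ∀ c z, fs c 1 z = f.eval z)
    (hrec : ∀ c n z, fs c (n + 2) z = fs c (n + 1) z * fs c n z + c) :
    (∀ c : ℂ, 2 < ‖c‖ →
      ¬ BddAbove (Set.range fun n => ‖fs c n 0‖)) ∧
    Metric.ball (0 : ℂ) (1 / 4) ⊆
      {c : ℂ | BddAbove (Set.range fun n => ‖fs c n 0‖)} ∧
    {c : ℂ | BddAbove (Set.range fun n => ‖fs c n 0‖)} ⊆
      Metric.closedBall (0 : ℂ) 2 :=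
  stmt14_general f hf0 fs h0 h1 hrec
end
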